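/- arXiv:1809.09701 — 5 statements merged into one kernel-verified Lean document; each statement's English description precedes it below -/
import Mathlib

section
/- Let A be a finite set of n points in the plane in general position. Any sequence of edge flips in triangulations of A, in which each flip replaces an edge {a,b} by an edge {c,d} such that d lies strictly inside the circumcircle of triangle abc, has length at most n(n-1)/2. -/
/-- The plane `ℝ²`. -/
abbrev Pt : Type := Fin 2 → ℝ

/-- Three-dimensional space `ℝ³`. -/
abbrev LPt : Type := Fin 3 → ℝ

/-- The lifting of a planar point `p` via the height function `ω`. -/
noncomputable def liftPt (ω : Pt → ℝ) (p : Pt) : LPt := ![p 0, p 1, ω p]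

/-- A (geometric) triangulation of a finite planar point set `A`. -/
structure Triangulation (A : Finset Pt) where
  tris : Finset (Finset Pt)
  card3 : ∀ t ∈ tris, t.card = 3
  verts : ∀ t ∈ tris, (t : Set Pt) ⊆ (A : Set Pt)
  indep : ∀ t ∈ tris, AffineIndependent ℝ (fun x : (t : Set Pt) => (x : Pt))
  cover : (⋃ t ∈ tris, convexHull ℝ (t : Set Pt)) = convexHull ℝ (A : Set Pt)
  inter : ∀ t ∈ tris, ∀ s ∈ tris,
    convexHull ℝ (t : Set Pt) ∩ convexHull ℝ (s : Set Pt)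
      = convexHull ℝ ((t ∩ s : Finset Pt) : Set Pt)

/-- `f` is the affine function whose graph is the plane through the lifted points
`a'`, `b'`, `c'`. -/
def PlaneAt (ω : Pt → ℝ) (a b c : Pt) (f : Pt →ᵃ[ℝ] ℝ) : Prop :=
  f a = ω a ∧ f b = ω b ∧ f c = ω c

/-- A `2-2` up-flip replacing the edge `{a,b}` by `{c,d}`: the lifted point `d'` lies
strictly above the plane through `a'`, `b'`, `c'`, so the two triangles containing the
edge `ab` are (projections of) the lower faces of the lifted tetrahedron. -/
def Up22 {A : Finset Pt} (ω : Pt → ℝ) (T1 T2 : Triangulation A) (a b c d : Pt) : Prop :=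
  ({a, b, c} : Finset Pt) ∈ T1.tris ∧ ({a, b, d} : Finset Pt) ∈ T1.tris ∧
  T2.tris = (T1.tris \ {({a, b, c} : Finset Pt), {a, b, d}}) ∪ {({a, c, d} : Finset Pt), {b, c, d}} ∧
  ∃ f : Pt →ᵃ[ℝ] ℝ, PlaneAt ω a b c f ∧ f d < ω d

/-- A `1-3` up-flip inserting the vertex `d` into the triangle `abc`; the lower face of the
lifted tetrahedron is `a'b'c'` (the lifted point `d'` lies strictly above its plane). -/
def Up13 {A : Finset Pt} (ω : Pt → ℝ) (T1 T2 : Triangulation A) (a b c d : Pt) : Prop :=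
  ({a, b, c} : Finset Pt) ∈ T1.tris ∧
  T2.tris = (T1.tris \ {({a, b, c} : Finset Pt)}) ∪
      {({a, b, d} : Finset Pt), {b, c, d}, {a, c, d}} ∧
  ∃ f : Pt →ᵃ[ℝ] ℝ, PlaneAt ω a b c f ∧ f d < ω d

/-- A `3-1` up-flip deleting the vertex `d` from the triangle `abc`; the lower faces of the
lifted tetrahedron are the three faces containing `d'` (which lies strictly below the plane
through `a'`, `b'`, `c'`). -/
def Up31 {A : Finset Pt} (ω : Pt → ℝ) (T1 T2 : Triangulation A) (a b c d : Pt) : Prop :=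
  ({a, b, d} : Finset Pt) ∈ T1.tris ∧ ({b, c, d} : Finset Pt) ∈ T1.tris ∧
  ({a, c, d} : Finset Pt) ∈ T1.tris ∧
  T2.tris = (T1.tris \ {({a, b, d} : Finset Pt), {b, c, d}, {a, c, d}}) ∪
      {({a, b, c} : Finset Pt)} ∧
  ∃ f : Pt →ᵃ[ℝ] ℝ, PlaneAt ω a b c f ∧ ω d < f d

/-- An up-flip supported on the four points `a, b, c, d`: it replaces the (projections of)
the lower faces of the lifted tetrahedron `a'b'c'd'` by its upper faces. -/
def UpFlip {A : Finset Pt} (ω : Pt → ℝ) (T1 T2 : Triangulation A) (a b c d : Pt) : Prop :=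
  Up22 ω T1 T2 a b c d ∨ Up13 ω T1 T2 a b c d ∨ Up31 ω T1 T2 a b c d

/-- A down-flip is the reverse of an up-flip. -/
def DownFlip {A : Finset Pt} (ω : Pt → ℝ) (T1 T2 : Triangulation A) (a b c d : Pt) : Prop :=
  UpFlip ω T2 T1 a b c d

/-- `g` is the characteristic section of the triangulation `T` with respect to `ω`:
on (the convex hull of) each triangle of `T` it agrees with an affine function
interpolating `ω` at the vertices. -/
def IsCharSection {A : Finset Pt} (ω : Pt → ℝ) (T : Triangulation A) (g : Pt → ℝ) : Prop :=
  ∀ t ∈ T.tris, ∃ f : Pt →ᵃ[ℝ] ℝ, (∀ p ∈ t, f p = ω p) ∧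
    ∀ x ∈ convexHull ℝ (t : Set Pt), g x = f x

/-- `T` is the regular triangulation of `(A, ω)`: every lifted triangle is a lower face of
`conv(A^ω)`, i.e. its plane lies (weakly) below all lifted points. -/
def RegularTri {A : Finset Pt} (ω : Pt → ℝ) (T : Triangulation A) : Prop :=
  ∀ t ∈ T.tris, ∃ f : Pt →ᵃ[ℝ] ℝ, (∀ p ∈ t, f p = ω p) ∧ ∀ q ∈ A, f q ≤ ω q

/-- `T` is the farthest-point regular triangulation of `(A, ω)`: every lifted triangle is an
upper face of `conv(A^ω)`. -/
def FarRegularTri {A : Finset Pt} (ω : Pt → ℝ) (T : Triangulation A) : Prop :=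
  ∀ t ∈ T.tris, ∃ f : Pt →ᵃ[ℝ] ℝ, (∀ p ∈ t, f p = ω p) ∧ ∀ q ∈ A, ω q ≤ f q

/-- The height function `ω` is sufficiently generic: no four lifted points are coplanar. -/
def Generic (A : Finset Pt) (ω : Pt → ℝ) : Prop :=
  ∀ p ∈ A, ∀ q ∈ A, ∀ r ∈ A, ∀ s ∈ A,
    p ≠ q → p ≠ r → p ≠ s → q ≠ r → q ≠ s → r ≠ s →
    AffineIndependent ℝ ![liftPt ω p, liftPt ω q, liftPt ω r, liftPt ω s]

/-- The planar point set `A` is in general position: no three points are collinear. -/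
def GenPos (A : Finset Pt) : Prop :=
  ∀ p ∈ A, ∀ q ∈ A, ∀ r ∈ A, p ≠ q → p ≠ r → q ≠ r → ¬ Collinear ℝ ({p, q, r} : Set Pt)

/-- The height function `ω` is convex on `A`: every lifted point is a vertex of the lower
envelope of `conv(A^ω)`, i.e. it has a supporting plane lying strictly below all other
lifted points. -/
def ConvexHeight (A : Finset Pt) (ω : Pt → ℝ) : Prop :=
  ∀ p ∈ A, ∃ f : Pt →ᵃ[ℝ] ℝ, f p = ω p ∧ ∀ q ∈ A, q ≠ p → f q < ω q

/-- A set of planar points is in convex position if every point is a vertex of the convex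
hull (it is not in the convex hull of the others). -/
def ConvexPos (s : Set Pt) : Prop := ∀ p ∈ s, p ∉ convexHull ℝ (s \ {p})

/-- Squared Euclidean distance in the plane. -/
def sqdist2 (p q : Pt) : ℝ := (p 0 - q 0) ^ 2 + (p 1 - q 1) ^ 2

/-- `d` lies strictly inside the circumcircle of the triangle `abc`. -/
def InCircum (a b c d : Pt) : Prop :=
  ∃ o : Pt, ∃ r : ℝ, sqdist2 o a = r ∧ sqdist2 o b = r ∧ sqdist2 o c = r ∧ sqdist2 o d < r

/-- An edge flip from `T1` to `T2` replacing the edge `{a,b}` (shared by the triangles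
`abc` and `abd` of `T1`) by the edge `{c,d}`, performed because `d` lies strictly inside
the circumcircle of `abc`. -/
def DelFlip {A : Finset Pt} (T1 T2 : Triangulation A) (a b c d : Pt) : Prop :=
  ({a, b, c} : Finset Pt) ∈ T1.tris ∧ ({a, b, d} : Finset Pt) ∈ T1.tris ∧
  T2.tris = (T1.tris \ {({a, b, c} : Finset Pt), {a, b, d}}) ∪
      {({a, c, d} : Finset Pt), {b, c, d}} ∧
  InCircum a b c d

noncomputable section FlipHelpers

/-- the paraboloid height function -/
def wfun : Pt → ℝ := fun p => p 0 ^ 2 + p 1 ^ 2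

lemma le_on_hull {f g : Pt →ᵃ[ℝ] ℝ} {S : Set Pt} (h : ∀ p ∈ S, g p ≤ f p) :
    ∀ x ∈ convexHull ℝ S, g x ≤ f x := by
  have hconv : Convex ℝ {y : Pt | g y ≤ f y} := by
    intro x hx y hy a b ha hb hab
    simp only [Set.mem_setOf_eq] at *
    rw [Convex.combo_affine_apply hab, Convex.combo_affine_apply hab]
    have := add_le_add (smul_le_smul_of_nonneg_left hx ha)
      (smul_le_smul_of_nonneg_left hy hb)
    simpa using this
  exact fun x hx => convexHull_min h hconv hx

lemma eq_on_hull {f g : Pt →ᵃ[ℝ] ℝ} {S : Set Pt} (h : ∀ p ∈ S, g p = f p) :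
    ∀ x ∈ convexHull ℝ S, g x = f x := fun x hx =>
  le_antisymm (le_on_hull (fun p hp => (h p hp).le) x hx)
    (le_on_hull (fun p hp => (h p hp).ge) x hx)

lemma comb3 (f : Pt →ᵃ[ℝ] ℝ) {α β γ : ℝ} (h : α + β + γ = 1) (x y z : Pt) :
    f (α • x + β • y + γ • z) = α * f x + β * f y + γ * f z := by
  have hw : ∑ i, ![α, β, γ] i = 1 := by simp [Fin.sum_univ_three, h]
  have h1 : (Finset.univ.affineCombination ℝ ![x, y, z] ![α, β, γ]) = α • x + β • y + γ • z := by
    rw [Finset.affineCombination_eq_linear_combination _ _ _ hw]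
    simp [Fin.sum_univ_three]
  have h2 := Finset.map_affineCombination (Finset.univ) ![x, y, z] ![α, β, γ] hw f
  rw [h1] at h2
  rw [h2, Finset.affineCombination_eq_linear_combination _ _ _ hw]
  simp [Fin.sum_univ_three, smul_eq_mul]

lemma comb2 (f : Pt →ᵃ[ℝ] ℝ) {α β : ℝ} (h : α + β = 1) (x y : Pt) :
    f (α • x + β • y) = α * f x + β * f y := by
  have := Convex.combo_affine_apply (f := f) (x := x) (y := y) h
  simpa [smul_eq_mul] using this

lemma mem_hull3 {α β γ : ℝ} (hα : 0 ≤ α) (hβ : 0 ≤ β) (hγ : 0 ≤ γ) (h : α + β + γ = 1)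
    {x y z : Pt} {S : Set Pt} (hx : x ∈ S) (hy : y ∈ S) (hz : z ∈ S) :
    α • x + β • y + γ • z ∈ convexHull ℝ S := by
  have := Finset.centerMass_mem_convexHull (Finset.univ : Finset (Fin 3))
    (w := ![α, β, γ]) (by intro i _; fin_cases i <;> simpa)
    (by simp [Fin.sum_univ_three, h]) (z := ![x, y, z])
    (by intro i _; fin_cases i <;> simpa) (s := S)
  rw [Finset.centerMass_eq_of_sum_1] at this
  · simpa [Fin.sum_univ_three] using this
  · simp [Fin.sum_univ_three, h]

lemma mem_hull2 {α β : ℝ} (hα : 0 ≤ α) (hβ : 0 ≤ β) (h : α + β = 1)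
    {x y : Pt} {S : Set Pt} (hx : x ∈ S) (hy : y ∈ S) :
    α • x + β • y ∈ convexHull ℝ S := by
  have h3 : α • x + β • y = α • x + β • y + (0:ℝ) • y := by module
  rw [h3]
  exact mem_hull3 hα hβ le_rfl (by linarith) hx hy hy

lemma range_vec3 (a b c : Pt) : Set.range ![a, b, c] = ({a, b, c} : Set Pt) := by
  ext p; simp [Fin.exists_fin_succ, eq_comm]; tauto

def basis3 {a b c : Pt} (h : ¬ Collinear ℝ ({a, b, c} : Set Pt)) :
    AffineBasis (Fin 3) ℝ Pt := by
  have hind : AffineIndependent ℝ ![a, b, c] := by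
    rw [affineIndependent_iff_not_collinear, range_vec3]; exact h
  refine AffineBasis.mk ![a, b, c] hind ?_
  rw [hind.affineSpan_eq_top_iff_card_eq_finrank_add_one]; simp

lemma interp3 {a b c : Pt} (h : ¬ Collinear ℝ ({a, b, c} : Set Pt)) (v : Pt → ℝ) :
    ∃ f : Pt →ᵃ[ℝ] ℝ, f a = v a ∧ f b = v b ∧ f c = v c := by
  set bb := basis3 h with hbb
  refine ⟨v a • bb.coord 0 + v b • bb.coord 1 + v c • bb.coord 2, ?_, ?_, ?_⟩
  · have h0 : a = bb 0 := rfl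
    rw [h0]; simp [bb.coord_apply]
  · have h0 : b = bb 1 := rfl
    rw [h0]; simp [bb.coord_apply]
  · have h0 : c = bb 2 := rfl
    rw [h0]; simp [bb.coord_apply]

lemma card3_ne {a b c : Pt} (h : ({a, b, c} : Finset Pt).card = 3) :
    a ≠ b ∧ a ≠ c ∧ b ≠ c := by
  refine ⟨?_, ?_, ?_⟩
  · rintro rfl
    have h2 : ({a, a, c} : Finset Pt) = {a, c} := by
      ext p; simp
    rw [h2] at h
    have := Finset.card_insert_le a ({c} : Finset Pt)
    simp at this; omega
  · rintro rfl
    have h2 : ({a, b, a} : Finset Pt) = {a, b} := by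
      ext p; simp; tauto
    rw [h2] at h
    have := Finset.card_insert_le a ({b} : Finset Pt)
    simp at this; omega
  · rintro rfl
    have h2 : ({a, b, b} : Finset Pt) = {a, b} := by
      ext p; simp
    rw [h2] at h
    have := Finset.card_insert_le a ({b} : Finset Pt)
    simp at this; omega

/-- barycentric expansion of a fourth point over a non-collinear triple -/
lemma bary3 {a b c : Pt} (h : ¬ Collinear ℝ ({a, b, c} : Set Pt)) (d : Pt) :
    ∃ lam mu nu : ℝ, lam + mu + nu = 1 ∧ d = lam • a + mu • b + nu • c := by
  set bb := basis3 h with hbb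
  have hpts : bb 0 = a ∧ bb 1 = b ∧ bb 2 = c := ⟨rfl, rfl, rfl⟩
  refine ⟨bb.coord 0 d, bb.coord 1 d, bb.coord 2 d, ?_, ?_⟩
  · have h2 := bb.sum_coord_apply_eq_one d
    rw [Fin.sum_univ_three] at h2
    exact h2
  · have hsum : ∑ i, (fun i => bb.coord i d) i = 1 := bb.sum_coord_apply_eq_one d
    have h1 := bb.affineCombination_coord_eq_self d
    rw [Finset.affineCombination_eq_linear_combination _ _ _ hsum] at h1
    have hco : ⇑bb = ![a, b, c] := rfl
    rw [hco] at h1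
    rw [Fin.sum_univ_three] at h1
    exact h1.symm

def crossMap (a b : Pt) : Pt →ᵃ[ℝ] ℝ :=
  (-(b 1 - a 1)) • (LinearMap.proj 0 : Pt →ₗ[ℝ] ℝ).toAffineMap
  + (b 0 - a 0) • (LinearMap.proj 1 : Pt →ₗ[ℝ] ℝ).toAffineMap
  + AffineMap.const ℝ Pt ((b 1 - a 1) * a 0 - (b 0 - a 0) * a 1)

lemma crossMap_apply (a b p : Pt) :
    crossMap a b p = (b 0 - a 0) * (p 1 - a 1) - (b 1 - a 1) * (p 0 - a 0) := by
  simp [crossMap, smul_eq_mul]; ring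

lemma crossMap_self (a b : Pt) : crossMap a b a = 0 := by rw [crossMap_apply]; ring
lemma crossMap_self' (a b : Pt) : crossMap a b b = 0 := by rw [crossMap_apply]; ring

lemma pt_ext {p q : Pt} (h0 : p 0 = q 0) (h1 : p 1 = q 1) : p = q := by
  funext i; fin_cases i <;> assumption

lemma pt_ne {p q : Pt} (h : p ≠ q) : p 0 ≠ q 0 ∨ p 1 ≠ q 1 := by
  by_contra hc
  push_neg at hc
  exact h (pt_ext hc.1 hc.2)

lemma collinear_of_cross {a b c : Pt} (hab : a ≠ b) (h : crossMap a b c = 0) :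
    Collinear ℝ ({a, b, c} : Set Pt) := by
  rw [crossMap_apply] at h
  rw [collinear_iff_of_mem (Set.mem_insert a _)]
  refine ⟨b - a, ?_⟩
  intro p hp
  rcases hp with rfl | rfl | hp
  · exact ⟨0, by simp⟩
  · exact ⟨1, by simp⟩
  · rw [Set.mem_singleton_iff] at hp
    subst hp
    rcases pt_ne hab with h0 | h0
    · have hne : b 0 - a 0 ≠ 0 := sub_ne_zero.mpr (Ne.symm h0)
      refine ⟨(p 0 - a 0) / (b 0 - a 0), pt_ext ?_ ?_⟩ <;>
        simp only [Pi.add_apply, Pi.smul_apply, Pi.sub_apply, smul_eq_mul, vadd_eq_add] <;>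
        field_simp
      · ring
      · linear_combination h
    · have hne : b 1 - a 1 ≠ 0 := sub_ne_zero.mpr (Ne.symm h0)
      refine ⟨(p 1 - a 1) / (b 1 - a 1), pt_ext ?_ ?_⟩ <;>
        simp only [Pi.add_apply, Pi.smul_apply, Pi.sub_apply, smul_eq_mul, vadd_eq_add] <;>
        field_simp
      · linear_combination -h
      · ring

lemma line_param {a b : Pt} (hab : a ≠ b) {x : Pt} (h : crossMap a b x = 0) :
    ∃ u : ℝ, x = (1 - u) • a + u • b := by
  rw [crossMap_apply] at h
  have hD : (0:ℝ) < (b 0 - a 0) ^ 2 + (b 1 - a 1) ^ 2 := by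
    rcases pt_ne hab with h0 | h0
    · have hne : b 0 - a 0 ≠ 0 := sub_ne_zero.mpr (Ne.symm h0)
      have h2 : (0:ℝ) < (b 0 - a 0) ^ 2 :=
        lt_of_le_of_ne (sq_nonneg _) (Ne.symm (pow_ne_zero 2 hne))
      nlinarith [sq_nonneg (b 1 - a 1)]
    · have hne : b 1 - a 1 ≠ 0 := sub_ne_zero.mpr (Ne.symm h0)
      have h2 : (0:ℝ) < (b 1 - a 1) ^ 2 :=
        lt_of_le_of_ne (sq_nonneg _) (Ne.symm (pow_ne_zero 2 hne))
      nlinarith [sq_nonneg (b 0 - a 0)]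
  have hDne := ne_of_gt hD
  refine ⟨((x 0 - a 0) * (b 0 - a 0) + (x 1 - a 1) * (b 1 - a 1)) /
      ((b 0 - a 0) ^ 2 + (b 1 - a 1) ^ 2), pt_ext ?_ ?_⟩ <;>
    simp only [Pi.add_apply, Pi.smul_apply, smul_eq_mul] <;> field_simp
  · linear_combination (-(b 1 - a 1)) * h
  · linear_combination (b 0 - a 0) * h

def circPlane (o : Pt) (r : ℝ) : Pt →ᵃ[ℝ] ℝ :=
  (2 * o 0) • (LinearMap.proj 0 : Pt →ₗ[ℝ] ℝ).toAffineMap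
  + (2 * o 1) • (LinearMap.proj 1 : Pt →ₗ[ℝ] ℝ).toAffineMap
  + AffineMap.const ℝ Pt (r - o 0 ^ 2 - o 1 ^ 2)

lemma circPlane_apply (o : Pt) (r : ℝ) (p : Pt) :
    circPlane o r p = 2 * o 0 * p 0 + 2 * o 1 * p 1 + (r - o 0 ^ 2 - o 1 ^ 2) := by
  simp [circPlane, smul_eq_mul]

lemma circPlane_sub (o : Pt) (r : ℝ) (p : Pt) :
    circPlane o r p - wfun p = r - sqdist2 o p := by
  rw [circPlane_apply]; simp only [wfun, sqdist2]; ring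

/-- the two triangles of a triangulation sharing edge ab have their apexes on
(weakly) opposite sides of every affine functional vanishing on a,b -/
lemma opp_side {A : Finset Pt} (T : Triangulation A) (hpos : GenPos A) {a b c d : Pt}
    (h1 : ({a, b, c} : Finset Pt) ∈ T.tris) (h2 : ({a, b, d} : Finset Pt) ∈ T.tris)
    (hcd : c ≠ d) (L : Pt →ᵃ[ℝ] ℝ) (hLa : L a = 0) (hLb : L b = 0)
    (hLc : 0 < L c) (hLd : 0 < L d) : False := by
  obtain ⟨hab, hac, hbc⟩ := card3_ne (T.card3 _ h1)
  obtain ⟨-, had, hbd⟩ := card3_ne (T.card3 _ h2)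
  have ha : a ∈ A := by
    have := T.verts _ h1 (by simp : a ∈ (({a, b, c} : Finset Pt) : Set Pt))
    simpa using this
  have hb : b ∈ A := by
    have := T.verts _ h1 (by simp : b ∈ (({a, b, c} : Finset Pt) : Set Pt))
    simpa using this
  have hc : c ∈ A := by
    have := T.verts _ h1 (by simp : c ∈ (({a, b, c} : Finset Pt) : Set Pt))
    simpa using this
  have hncol : ¬ Collinear ℝ ({a, b, c} : Set Pt) := hpos a ha b hb c hc hab hac hbc
  obtain ⟨lam, mu, nu, hsum, hd⟩ := bary3 hncol d
  have hLdc : L d = nu * L c := by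
    rw [hd, comb3 L hsum, hLa, hLb]; ring
  have hnu : 0 < nu := by
    rcases lt_trichotomy nu 0 with h | h | h
    · nlinarith
    · rw [h] at hLdc; simp at hLdc; linarith
    · exact h
  set δ : ℝ := min (1/2 : ℝ) (1 / (4 * (|lam| + |mu| + 1))) with hδdef
  have habs : (0:ℝ) < |lam| + |mu| + 1 := by positivity
  have hδ0 : 0 < δ := lt_min (by norm_num) (by positivity)
  have hδh : δ ≤ 1/2 := min_le_left _ _
  have hδa : δ * (|lam| + |mu| + 1) ≤ 1/4 := by
    have h2 : δ ≤ 1 / (4 * (|lam| + |mu| + 1)) := min_le_right _ _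
    calc δ * (|lam| + |mu| + 1) ≤ (1 / (4 * (|lam| + |mu| + 1))) * (|lam| + |mu| + 1) := by
          apply mul_le_mul_of_nonneg_right h2 (le_of_lt habs)
      _ = 1/4 := by field_simp
  have hδlam : δ * |lam| < 1/4 := by nlinarith [abs_nonneg lam, abs_nonneg mu]
  have hδmu : δ * |mu| < 1/4 := by nlinarith [abs_nonneg lam, abs_nonneg mu]
  set w1 : ℝ := (1 - δ)/2 + δ * lam with hw1def
  set w2 : ℝ := (1 - δ)/2 + δ * mu with hw2def
  set w3 : ℝ := δ * nu with hw3def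
  have hw1 : 0 ≤ w1 := by
    have h3 : δ * (-|lam|) ≤ δ * lam :=
      mul_le_mul_of_nonneg_left (neg_abs_le lam) (le_of_lt hδ0)
    rw [hw1def]; nlinarith
  have hw2 : 0 ≤ w2 := by
    have h3 : δ * (-|mu|) ≤ δ * mu :=
      mul_le_mul_of_nonneg_left (neg_abs_le mu) (le_of_lt hδ0)
    rw [hw2def]; nlinarith
  have hw3 : 0 ≤ w3 := by positivity
  have hwsum : w1 + w2 + w3 = 1 := by
    rw [hw1def, hw2def, hw3def]; nlinarith [hsum]
  set q : Pt := w1 • a + w2 • b + w3 • c with hqdef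
  have hq1 : q ∈ convexHull ℝ (({a, b, c} : Finset Pt) : Set Pt) := by
    apply mem_hull3 hw1 hw2 hw3 hwsum <;> simp
  have hqd : q = ((1 - δ)/2) • a + ((1 - δ)/2) • b + δ • d := by
    rw [hqdef, hd, hw1def, hw2def, hw3def]
    module
  have hq2 : q ∈ convexHull ℝ (({a, b, d} : Finset Pt) : Set Pt) := by
    rw [hqd]
    apply mem_hull3 (by linarith) (by linarith) (le_of_lt hδ0) (by ring) <;> simp
  have hkey := T.inter _ h1 _ h2
  have hq : q ∈ convexHull ℝ ((({a, b, c} ∩ {a, b, d} : Finset Pt)) : Set Pt) := by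
    rw [← hkey]; exact ⟨hq1, hq2⟩
  have hLq0 : L q = 0 := by
    have hzero : ∀ p ∈ ((({a, b, c} ∩ {a, b, d} : Finset Pt)) : Set Pt),
        L p = (AffineMap.const ℝ Pt (0:ℝ)) p := by
      intro p hp
      simp only [Finset.coe_inter, Set.mem_inter_iff, Finset.mem_coe,
        Finset.mem_insert, Finset.mem_singleton] at hp
      obtain ⟨hp1, hp2⟩ := hp
      rcases hp1 with rfl | rfl | rfl
      · simpa using hLa
      · simpa using hLb
      · rcases hp2 with rfl | rfl | rfl
        · simpa using hLa
        · simpa using hLb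
        · exact absurd rfl hcd
    have := eq_on_hull hzero q hq
    simpa using this
  have hLq : L q = δ * nu * L c := by
    rw [hqdef, comb3 L hwsum, hLa, hLb, hw3def]; ring
  rw [hLq0] at hLq
  nlinarith

lemma same_tri_eq {A : Finset Pt} (T : Triangulation A) {t s : Finset Pt}
    (ht : t ∈ T.tris) (hs : s ∈ T.tris) {x : Pt}
    (hxt : x ∈ convexHull ℝ (t : Set Pt)) (hxs : x ∈ convexHull ℝ (s : Set Pt))
    {f g : Pt →ᵃ[ℝ] ℝ} (hft : ∀ p ∈ t, f p = wfun p) (hgs : ∀ p ∈ s, g p = wfun p) :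
    g x = f x := by
  have hx : x ∈ convexHull ℝ ((t ∩ s : Finset Pt) : Set Pt) := by
    rw [← T.inter t ht s hs]; exact ⟨hxt, hxs⟩
  refine eq_on_hull ?_ x hx
  intro p hp
  simp only [Finset.coe_inter, Set.mem_inter_iff, Finset.mem_coe] at hp
  rw [hgs p hp.2, hft p hp.1]

lemma flip_step {A : Finset Pt} (hpos : GenPos A) {T1 T2 : Triangulation A} {a b c d : Pt}
    (hf : DelFlip T1 T2 a b c d) {t s : Finset Pt} (ht : t ∈ T1.tris) (hs : s ∈ T2.tris)
    {x : Pt} (hxt : x ∈ convexHull ℝ (t : Set Pt)) (hxs : x ∈ convexHull ℝ (s : Set Pt))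
    {f g : Pt →ᵃ[ℝ] ℝ} (hft : ∀ p ∈ t, f p = wfun p) (hgs : ∀ p ∈ s, g p = wfun p) :
    g x ≤ f x := by
  obtain ⟨h1, h2, h3, o, r, hoa, hob, hoc, hod⟩ := hf
  set F := circPlane o r with hFdef
  clear_value F
  have hFa : F a = wfun a := by have := circPlane_sub o r a; rw [← hFdef, hoa] at this; linarith
  have hFb : F b = wfun b := by have := circPlane_sub o r b; rw [← hFdef, hob] at this; linarith
  have hFc : F c = wfun c := by have := circPlane_sub o r c; rw [← hFdef, hoc] at this; linarith
  have hFd : wfun d < F d := by have := circPlane_sub o r d; rw [← hFdef] at this; nlinarith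
  have hacd : ({a, c, d} : Finset Pt) ∈ T2.tris := by
    rw [h3]; apply Finset.mem_union_right; simp
  obtain ⟨hac', had', hcd⟩ := card3_ne (T2.card3 _ hacd)
  by_cases hsT1 : s ∈ T1.tris
  · exact (same_tri_eq T1 ht hsT1 hxt hxs hft hgs).le
  have hs2 : s = {a, c, d} ∨ s = {b, c, d} := by
    rw [h3, Finset.mem_union] at hs
    rcases hs with hs | hs
    · exact absurd (Finset.mem_sdiff.mp hs).1 hsT1
    · simpa using hs
  by_cases ht1 : t = ({a, b, c} : Finset Pt) ∨ t = ({a, b, d} : Finset Pt)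
  · rcases ht1 with rfl | rfl
    · -- t = {a,b,c} : f agrees with F on conv t
      have hfF : f x = F x := by
        refine eq_on_hull ?_ x hxt
        intro p hp
        simp only [Finset.coe_insert, Finset.coe_singleton, Set.mem_insert_iff,
          Set.mem_singleton_iff] at hp
        have hp' : p ∈ ({a, b, c} : Finset Pt) := by simpa using hp
        rw [hft p hp']
        rcases hp with rfl | rfl | rfl
        · exact hFa.symm
        · exact hFb.symm
        · exact hFc.symm
      rw [hfF]
      refine le_on_hull ?_ x hxs
      intro p hp
      have hp' : p ∈ s := by simpa using hp
      rw [hgs p hp']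
      rcases hs2 with rfl | rfl <;> simp only [Finset.mem_insert, Finset.mem_singleton] at hp' <;>
        rcases hp' with rfl | rfl | rfl <;> first
          | exact hFa.ge | exact hFb.ge | exact hFc.ge | exact hFd.le
    · -- t = {a,b,d}
      have hfa : f a = wfun a := hft a (by simp)
      have hfb : f b = wfun b := hft b (by simp)
      have hfd : f d = wfun d := hft d (by simp)
      have hfc : wfun c ≤ f c := by
        by_contra hlt
        push_neg at hlt
        set L : Pt →ᵃ[ℝ] ℝ := F - f with hLdef
        have hLap : ∀ p : Pt, L p = F p - f p := by intro p; simp [hLdef]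
        refine opp_side T1 hpos h1 h2 hcd L ?_ ?_ ?_ ?_
        · rw [hLap, hFa, hfa]; ring
        · rw [hLap, hFb, hfb]; ring
        · rw [hLap, hFc]; linarith
        · rw [hLap, hfd]; linarith
      refine le_on_hull ?_ x hxs
      intro p hp
      have hp' : p ∈ s := by simpa using hp
      rw [hgs p hp']
      rcases hs2 with rfl | rfl <;> simp only [Finset.mem_insert, Finset.mem_singleton] at hp' <;>
        rcases hp' with rfl | rfl | rfl <;> first
          | exact hfa.ge | exact hfb.ge | exact hfc | exact hfd.ge
  · push_neg at ht1
    have ht2 : t ∈ T2.tris := by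
      rw [h3]
      apply Finset.mem_union_left
      rw [Finset.mem_sdiff]
      refine ⟨ht, ?_⟩
      simp only [Finset.mem_insert, Finset.mem_singleton]
      push_neg
      exact ht1
    exact (same_tri_eq T2 ht2 hs hxt hxs hft hgs).le

lemma vert_memA {A : Finset Pt} (T : Triangulation A) {t : Finset Pt} (ht : t ∈ T.tris)
    {p : Pt} (hp : p ∈ t) : p ∈ A := by
  have h2 : p ∈ (t : Set Pt) := by simpa using hp
  have := T.verts _ ht h2
  simpa using this

lemma tri_interp {A : Finset Pt} (hpos : GenPos A) (T : Triangulation A) {t : Finset Pt}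
    (ht : t ∈ T.tris) : ∃ f : Pt →ᵃ[ℝ] ℝ, ∀ p ∈ t, f p = wfun p := by
  obtain ⟨p, q, r, hpq, hpr, hqr, rfl⟩ := Finset.card_eq_three.mp (T.card3 _ ht)
  have hp : p ∈ A := vert_memA T ht (by simp)
  have hq : q ∈ A := vert_memA T ht (by simp)
  have hr : r ∈ A := vert_memA T ht (by simp)
  have hncol := hpos p hp q hq r hr hpq hpr hqr
  obtain ⟨f, h1, h2, h3⟩ := interp3 hncol wfun
  refine ⟨f, ?_⟩
  intro z hz
  simp only [Finset.mem_insert, Finset.mem_singleton] at hz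
  rcases hz with rfl | rfl | rfl <;> assumption

lemma seg_in_circle {t r : ℝ} {o c d x : Pt} (ht0 : 0 < t) (ht1 : t < 1)
    (hc : sqdist2 o c = r) (hd : sqdist2 o d < r)
    (hx0 : x 0 = (1 - t) * c 0 + t * d 0) (hx1 : x 1 = (1 - t) * c 1 + t * d 1) :
    sqdist2 o x < r := by
  simp only [sqdist2] at *
  rw [hx0, hx1]
  nlinarith [mul_pos ht0 (by linarith : (0:ℝ) < 1 - t),
    sq_nonneg (c 0 - d 0), sq_nonneg (c 1 - d 1),
    mul_pos ht0 (by linarith : (0:ℝ) < r - ((o 0 - d 0)^2 + (o 1 - d 1)^2)),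
    mul_nonneg (mul_nonneg ht0.le (by linarith : (0:ℝ) ≤ 1 - t))
      (by positivity : (0:ℝ) ≤ (c 0 - d 0)^2 + (c 1 - d 1)^2)]

lemma u_bounds {u r : ℝ} {o a b x : Pt} (hab : a ≠ b)
    (ha : sqdist2 o a = r) (hb : sqdist2 o b = r) (hx : sqdist2 o x < r)
    (hx0 : x 0 = (1 - u) * a 0 + u * b 0) (hx1 : x 1 = (1 - u) * a 1 + u * b 1) :
    0 < u ∧ u < 1 := by
  have habD : (0:ℝ) < (b 0 - a 0) ^ 2 + (b 1 - a 1) ^ 2 := by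
    rcases pt_ne hab with h0 | h0
    · have hne : b 0 - a 0 ≠ 0 := sub_ne_zero.mpr (Ne.symm h0)
      have h2 : (0:ℝ) < (b 0 - a 0) ^ 2 :=
        lt_of_le_of_ne (sq_nonneg _) (Ne.symm (pow_ne_zero 2 hne))
      nlinarith [sq_nonneg (b 1 - a 1)]
    · have hne : b 1 - a 1 ≠ 0 := sub_ne_zero.mpr (Ne.symm h0)
      have h2 : (0:ℝ) < (b 1 - a 1) ^ 2 :=
        lt_of_le_of_ne (sq_nonneg _) (Ne.symm (pow_ne_zero 2 hne))
      nlinarith [sq_nonneg (b 0 - a 0)]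
  simp only [sqdist2] at *
  have hprod : 0 < u * (1 - u) := by
    have key : (o 0 - x 0)^2 + (o 1 - x 1)^2 =
        r - u * (1 - u) * ((b 0 - a 0)^2 + (b 1 - a 1)^2) := by
      rw [hx0, hx1]; linear_combination (1 - u) * ha + u * hb
    nlinarith [key]
  constructor <;> nlinarith [hprod]

lemma cross_t_facts {lc ld : ℝ} (h : lc * ld < 0) :
    lc - ld ≠ 0 ∧ 0 < lc / (lc - ld) ∧ lc / (lc - ld) < 1 ∧
      (1 - lc / (lc - ld)) * lc + (lc / (lc - ld)) * ld = 0 := by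
  have hcases : (lc < 0 ∧ 0 < ld) ∨ (0 < lc ∧ ld < 0) := by
    rcases lt_trichotomy lc 0 with h5 | h5 | h5
    · left; refine ⟨h5, ?_⟩
      by_contra hle; push_neg at hle
      nlinarith
    · exfalso; rw [h5] at h; nlinarith
    · right; refine ⟨h5, ?_⟩
      by_contra hle; push_neg at hle
      nlinarith
  have hden : lc - ld ≠ 0 := by
    rcases hcases with ⟨h5, h6⟩ | ⟨h5, h6⟩ <;> intro hz <;> nlinarith
  refine ⟨hden, ?_, ?_, by field_simp; ring⟩
  · rw [div_pos_iff]
    rcases hcases with ⟨h5, h6⟩ | ⟨h5, h6⟩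
    · right; exact ⟨h5, by linarith⟩
    · left; exact ⟨h5, by linarith⟩
  · rw [div_lt_one_iff]
    rcases hcases with ⟨h5, h6⟩ | ⟨h5, h6⟩
    · right; right; exact ⟨by linarith, by linarith⟩
    · left; exact ⟨by linarith, by linarith⟩

set_option maxHeartbeats 2000000 in
lemma no_repeat {A : Finset Pt} (hpos : GenPos A) {m : ℕ} {T : Fin (m+1) → Triangulation A}
    {a b c d : Fin m → Pt}
    (hd : ∀ i, DelFlip (T i.castSucc) (T i.succ) (a i) (b i) (c i) (d i))
    {i j : Fin m} (hij : i < j)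
    (he : ({a i, b i} : Finset Pt) = {a j, b j}) : False := by
  obtain ⟨h1, h2, h3, o, r, hoa, hob, hoc, hod⟩ := hd i
  set F := circPlane o r with hFdef
  clear_value F
  have hFa : F (a i) = wfun (a i) := by
    have := circPlane_sub o r (a i); rw [← hFdef, hoa] at this; linarith
  have hFb : F (b i) = wfun (b i) := by
    have := circPlane_sub o r (b i); rw [← hFdef, hob] at this; linarith
  have hFc : F (c i) = wfun (c i) := by
    have := circPlane_sub o r (c i); rw [← hFdef, hoc] at this; linarith
  have hFd : wfun (d i) < F (d i) := by
    have := circPlane_sub o r (d i); rw [← hFdef] at this; nlinarith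
  -- memberships and distinctness
  have ha : a i ∈ A := vert_memA _ h1 (by simp)
  have hb : b i ∈ A := vert_memA _ h1 (by simp)
  have hc : c i ∈ A := vert_memA _ h1 (by simp)
  have hdA : d i ∈ A := vert_memA _ h2 (by simp)
  obtain ⟨hab, hac, hbc⟩ := card3_ne ((T i.castSucc).card3 _ h1)
  obtain ⟨-, had, hbd⟩ := card3_ne ((T i.castSucc).card3 _ h2)
  have hacd : ({a i, c i, d i} : Finset Pt) ∈ (T i.succ).tris := by
    rw [h3]; apply Finset.mem_union_right; simp
  obtain ⟨-, -, hcd⟩ := card3_ne ((T i.succ).card3 _ hacd)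
  -- opposite sides of line ab
  set L0 := crossMap (a i) (b i) with hL0def
  clear_value L0
  have hL0a : L0 (a i) = 0 := by rw [hL0def]; exact crossMap_self _ _
  have hL0b : L0 (b i) = 0 := by rw [hL0def]; exact crossMap_self' _ _
  have hc0 : L0 (c i) ≠ 0 := by
    intro hz
    rw [hL0def] at hz
    exact hpos (a i) ha (b i) hb (c i) hc hab hac hbc (collinear_of_cross hab hz)
  have hd0 : L0 (d i) ≠ 0 := by
    intro hz
    rw [hL0def] at hz
    exact hpos (a i) ha (b i) hb (d i) hdA hab had hbd (collinear_of_cross hab hz)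
  have hsign : L0 (c i) * L0 (d i) < 0 := by
    rcases lt_trichotomy (L0 (c i)) 0 with hcneg | hczero | hcpos
    · rcases lt_trichotomy (L0 (d i)) 0 with hdneg | hdzero | hdpos
      · exfalso
        have hneg : ∀ p : Pt, (-L0) p = -(L0 p) := by intro p; simp
        refine opp_side (T i.castSucc) hpos h1 h2 hcd (-L0) ?_ ?_ ?_ ?_ <;> rw [hneg]
        · rw [hL0a]; ring
        · rw [hL0b]; ring
        · linarith
        · linarith
      · exact absurd hdzero hd0
      · nlinarith
    · exact absurd hczero hc0
    · rcases lt_trichotomy (L0 (d i)) 0 with hdneg | hdzero | hdpos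
      · nlinarith
      · exact absurd hdzero hd0
      · exact absurd (opp_side (T i.castSucc) hpos h1 h2 hcd L0 hL0a hL0b hcpos hdpos) id
  -- the crossing point
  obtain ⟨lc, hlc⟩ : ∃ v : ℝ, L0 (c i) = v := ⟨_, rfl⟩
  obtain ⟨ld, hld⟩ : ∃ v : ℝ, L0 (d i) = v := ⟨_, rfl⟩
  rw [hlc, hld] at hsign
  obtain ⟨hden, htt0, htt1, httlin⟩ := cross_t_facts hsign
  set tt : ℝ := lc / (lc - ld) with httdef
  clear_value tt
  set x : Pt := (1 - tt) • c i + tt • d i with hxdef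
  clear_value x
  have hLx : L0 x = 0 := by
    have hq := comb2 L0 (show (1 - tt) + tt = (1:ℝ) by ring) (c i) (d i)
    rw [hlc, hld] at hq
    rw [hxdef, hq]
    exact httlin
  have hLx' : crossMap (a i) (b i) x = 0 := by rw [← hL0def]; exact hLx
  obtain ⟨u, hxu⟩ := line_param hab hLx'
  -- x is strictly inside the circle
  have hx0 : x 0 = (1 - tt) * c i 0 + tt * d i 0 := by simp [hxdef]
  have hx1 : x 1 = (1 - tt) * c i 1 + tt * d i 1 := by simp [hxdef]
  have hoxr : sqdist2 o x < r := seg_in_circle htt0 htt1 hoc hod hx0 hx1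
  -- 0 < u < 1
  have hxu0 : x 0 = (1 - u) * a i 0 + u * b i 0 := by rw [hxu]; simp
  have hxu1 : x 1 = (1 - u) * a i 1 + u * b i 1 := by rw [hxu]; simp
  obtain ⟨hu0, hu1⟩ := u_bounds hab hoa hob hoxr hxu0 hxu1
  -- values
  set B : ℝ := (1 - tt) * wfun (c i) + tt * wfun (d i) with hBdef
  clear_value B
  set V : ℝ := (1 - u) * wfun (a i) + u * wfun (b i) with hVdef
  clear_value V
  have hBV : B < V := by
    have hFx1 : F x = (1 - tt) * F (c i) + tt * F (d i) := by
      rw [hxdef]; exact comb2 F (show (1 - tt) + tt = (1:ℝ) by ring) _ _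
    have hFx2 : F x = (1 - u) * F (a i) + u * F (b i) := by
      rw [hxu]; exact comb2 F (show (1 - u) + u = (1:ℝ) by ring) _ _
    have h5 : B < (1 - tt) * F (c i) + tt * F (d i) := by
      rw [hBdef, hFc]
      have := mul_lt_mul_of_pos_left hFd htt0
      linarith
    rw [hVdef, ← hFa, ← hFb, ← hFx2, hFx1]
    linarith
  -- the invariant
  set P : ℕ → Prop := (fun k => ∀ (hk : k < m + 1), ∀ s ∈ (T ⟨k, hk⟩).tris,
    x ∈ convexHull ℝ (s : Set Pt) → ∀ g : Pt →ᵃ[ℝ] ℝ,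
      (∀ p ∈ s, g p = wfun p) → g x ≤ B) with hPdef
  clear_value P
  have hbase : P (i.val + 1) := by
    rw [hPdef]
    intro hk s hs hxs g hgs
    have hieq : (⟨i.val + 1, hk⟩ : Fin (m + 1)) = i.succ := rfl
    rw [hieq] at hs
    have hncol2 : ¬ Collinear ℝ ({a i, c i, d i} : Set Pt) :=
      hpos (a i) ha (c i) hc (d i) hdA hac had hcd
    obtain ⟨g0, hg0a, hg0c, hg0d⟩ := interp3 hncol2 wfun
    have hg0 : ∀ p ∈ ({a i, c i, d i} : Finset Pt), g0 p = wfun p := by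
      intro p hp
      simp only [Finset.mem_insert, Finset.mem_singleton] at hp
      rcases hp with rfl | rfl | rfl <;> assumption
    have hxacd : x ∈ convexHull ℝ (({a i, c i, d i} : Finset Pt) : Set Pt) := by
      rw [hxdef]
      apply mem_hull2 (by linarith) (by linarith) (by ring) <;> simp
    have heq := same_tri_eq (T i.succ) hs hacd hxs hxacd hgs hg0
    have hg0x : g0 x = B := by
      have hq := comb2 g0 (show (1 - tt) + tt = (1:ℝ) by ring) (c i) (d i)
      rw [hg0c, hg0d] at hq
      rw [hxdef, hq, hBdef]
    rw [← heq, hg0x]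
  have hstep : ∀ k, i.val + 1 ≤ k → P k → P (k + 1) := by
    intro k hik hPk
    rw [hPdef] at hPk
    rw [hPdef]
    intro hk1 s hs hxs g hgs
    have hkm : k < m := by omega
    have hkm1 : k < m + 1 := by omega
    have flipk := hd ⟨k, hkm⟩
    have e1 : (Fin.castSucc ⟨k, hkm⟩ : Fin (m+1)) = ⟨k, hkm1⟩ := rfl
    have e2 : (Fin.succ ⟨k, hkm⟩ : Fin (m+1)) = ⟨k + 1, hk1⟩ := rfl
    rw [e1, e2] at flipk
    have hxA : x ∈ convexHull ℝ (A : Set Pt) := by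
      rw [hxu]
      apply mem_hull2 (by linarith) (by linarith) (by ring)
      · simpa using ha
      · simpa using hb
    rw [← (T ⟨k, hkm1⟩).cover] at hxA
    obtain ⟨t, ht, hxt⟩ := by simpa only [Set.mem_iUnion, exists_prop] using hxA
    obtain ⟨f, hf⟩ := tri_interp hpos (T ⟨k, hkm1⟩) ht
    have hgf : g x ≤ f x := flip_step hpos flipk ht hs hxt hxs hf hgs
    have hfB : f x ≤ B := hPk hkm1 t ht hxt f hf
    linarith
  have hPj : P j.val := by
    have hn : i.val + 1 ≤ j.val := by
      have := hij
      rw [Fin.lt_def] at this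
      omega
    clear he
    generalize j.val = jv at hn ⊢
    induction jv, hn using Nat.le_induction with
    | base => exact hbase
    | succ k hk ih => exact hstep k hk ih
  rw [hPdef] at hPj
  -- contradiction at flip j
  obtain ⟨hj1, hj2, hj3, oj, rj, hj4⟩ := hd j
  have hjcast : (⟨j.val, by omega⟩ : Fin (m + 1)) = j.castSucc := rfl
  have haj : a i ∈ ({a j, b j, c j} : Finset Pt) := by
    have h5 : a i ∈ ({a j, b j} : Finset Pt) := by rw [← he]; simp
    simp only [Finset.mem_insert, Finset.mem_singleton] at h5 ⊢
    tauto
  have hbj : b i ∈ ({a j, b j, c j} : Finset Pt) := by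
    have h5 : b i ∈ ({a j, b j} : Finset Pt) := by rw [← he]; simp
    simp only [Finset.mem_insert, Finset.mem_singleton] at h5 ⊢
    tauto
  obtain ⟨fj, hfj⟩ := tri_interp hpos (T j.castSucc) hj1
  have hxj : x ∈ convexHull ℝ (({a j, b j, c j} : Finset Pt) : Set Pt) := by
    rw [hxu]
    apply mem_hull2 (by linarith) (by linarith) (by ring)
    · simpa using haj
    · simpa using hbj
  have hfjx : fj x = V := by
    have hq := comb2 fj (show (1 - u) + u = (1:ℝ) by ring) (a i) (b i)
    rw [hfj _ haj, hfj _ hbj] at hq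
    rw [hxu, hq, hVdef]
  have := hPj (by omega) ({a j, b j, c j} : Finset Pt) (by rw [hjcast]; exact hj1) hxj fj hfj
  rw [hfjx] at this
  linarith

end FlipHelpers
/-- **Termination of Lawson's flip algorithm.**  Let `A` be a set of `n` points in the
plane in general position (no three collinear, no four cocircular).  Any sequence of edge
flips on triangulations of `A`, each flip replacing an edge `{a,b}` by `{c,d}` where `d`
lies strictly inside the circumcircle of the triangle `abc`, has length at most
`n * (n - 1) / 2`. -/
theorem flip_sequence_length_le (A : Finset Pt) (n : ℕ) (hn : A.card = n)
    (hpos : GenPos A)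
    (hcocirc : ∀ p ∈ A, ∀ q ∈ A, ∀ r ∈ A, ∀ s ∈ A,
      p ≠ q → p ≠ r → p ≠ s → q ≠ r → q ≠ s → r ≠ s →
      ¬ ∃ o : Pt, ∃ ρ : ℝ, sqdist2 o p = ρ ∧ sqdist2 o q = ρ ∧ sqdist2 o r = ρ ∧
          sqdist2 o s = ρ)
    (m : ℕ) (T : Fin (m + 1) → Triangulation A)
    (hflip : ∀ i : Fin m, ∃ a b c d : Pt,
      DelFlip (T i.castSucc) (T i.succ) a b c d) :
    m ≤ n * (n - 1) / 2 := by
  classical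
  choose a b c d hdf using hflip
  have hmem : ∀ i : Fin m, ({a i, b i} : Finset Pt) ∈ A.powersetCard 2 := by
    intro i
    obtain ⟨h1, h2, h3, hic⟩ := hdf i
    obtain ⟨hab, -, -⟩ := card3_ne ((T i.castSucc).card3 _ h1)
    rw [Finset.mem_powersetCard]
    constructor
    · intro p hp
      simp only [Finset.mem_insert, Finset.mem_singleton] at hp
      rcases hp with rfl | rfl
      · exact vert_memA _ h1 (by simp)
      · exact vert_memA _ h1 (by simp)
    · exact Finset.card_pair hab
  have hinj : Function.Injective
      (fun i : Fin m => (⟨{a i, b i}, hmem i⟩ : {s // s ∈ A.powersetCard 2})) := by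
    intro i j hij
    have hval : ({a i, b i} : Finset Pt) = {a j, b j} := congrArg Subtype.val hij
    by_contra hne
    rcases Ne.lt_or_gt hne with h | h
    · exact no_repeat hpos hdf h hval
    · exact no_repeat hpos hdf h hval.symm
  have hcard := Fintype.card_le_of_injective _ hinj
  rw [Fintype.card_fin, Fintype.card_coe, Finset.card_powersetCard, hn] at hcard
  rwa [Nat.choose_two_right] at hcard
end

section
/- The relation ≤₂ on triangulations of a finite planar point set A with height function ω, defined by T1 ≤₂ T2 if the characteristic section g_{ω,T1}(x) ≤ g_{ω,T2}(x) for all x ∈ conv(A), is a partial order on the set of all triangulations of A, provided ω is sufficiently generic (no 4 lifted points coplanar). -/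
/-- The relation `≤₂` on triangulations of `(A, ω)`: `T1 ≤₂ T2` iff the characteristic
section of `T1` lies vertically (weakly) below that of `T2` over `conv(A)`. -/
def le2 {A : Finset Pt} (ω : Pt → ℝ) (T1 T2 : Triangulation A) : Prop :=
  ∃ g1 g2 : Pt → ℝ, IsCharSection ω T1 g1 ∧ IsCharSection ω T2 g2 ∧
    ∀ x ∈ convexHull ℝ (A : Set Pt), g1 x ≤ g2 x

/-- Two affine maps to ℝ agreeing on a set agree on its affine span. -/
lemma eqOn_affineSpan_of_eqOn (f g : Pt →ᵃ[ℝ] ℝ) {s : Set Pt} (h : Set.EqOn f g s) :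
    Set.EqOn f g (affineSpan ℝ s : Set Pt) := by
  let Q : AffineSubspace ℝ Pt :=
    { carrier := {x | f x = g x}
      smul_vsub_vadd_mem' := by
        intro c p1 p2 p3 h1 h2 h3
        simp only [Set.mem_setOf_eq] at h1 h2 h3 ⊢
        rw [AffineMap.map_vadd, AffineMap.map_vadd, LinearMap.map_smul, LinearMap.map_smul,
          AffineMap.linearMap_vsub, AffineMap.linearMap_vsub, h1, h2, h3] }
  intro x hx
  have hle : affineSpan ℝ s ≤ Q := affineSpan_le.mpr h
  exact hle hx

lemma finrank_Pt : Module.finrank ℝ Pt = 2 := Module.finrank_fin_fun ℝ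

lemma tri_span (t : Finset Pt) (h3 : t.card = 3)
    (hi : AffineIndependent ℝ (fun x : (t : Set Pt) => (x : Pt))) :
    affineSpan ℝ (t : Set Pt) = ⊤ := by
  have hcard : Fintype.card ((t : Set Pt) : Type) = 2 + 1 := by
    simp [Finset.coe_sort_coe, h3]
  have := hi.affineSpan_eq_top_iff_card_eq_finrank_add_one.mpr (by rw [hcard, finrank_Pt])
  rwa [Subtype.range_coe] at this

lemma affineMap_sum_apply {ι : Type*} (s : Finset ι) (f : ι → (Pt →ᵃ[ℝ] ℝ)) (x : Pt) :
    (∑ i ∈ s, f i) x = ∑ i ∈ s, f i x :=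
  map_sum (⟨⟨fun g => g x, rfl⟩, fun a b => rfl⟩ : (Pt →ᵃ[ℝ] ℝ) →+ ℝ) f s

lemma exists_interp (ω : Pt → ℝ) (t : Finset Pt) (h3 : t.card = 3)
    (hi : AffineIndependent ℝ (fun x : (t : Set Pt) => (x : Pt))) :
    ∃ f : Pt →ᵃ[ℝ] ℝ, ∀ p ∈ t, f p = ω p := by
  classical
  let b : AffineBasis ((t : Set Pt) : Type) ℝ Pt :=
    ⟨fun x => (x : Pt), hi, by rw [Subtype.range_coe]; exact tri_span t h3 hi⟩
  refine ⟨∑ i : ((t : Set Pt) : Type), ω i • b.coord i, ?_⟩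
  intro p hp
  have hpb : p = b ⟨p, by simpa using hp⟩ := rfl
  rw [affineMap_sum_apply]
  rw [show (p : Pt) = b ⟨p, by simpa using hp⟩ from rfl]
  have : ∀ i : ((t : Set Pt) : Type), (ω i • b.coord i) (b ⟨p, by simpa using hp⟩)
      = if i = ⟨p, by simpa using hp⟩ then ω i else 0 := by
    intro i
    rw [AffineMap.coe_smul]
    simp only [Pi.smul_apply, smul_eq_mul, b.coord_apply]
    split <;> simp
  rw [Finset.sum_congr rfl fun i _ => this i, Finset.sum_ite_eq' Finset.univ,
    if_pos (Finset.mem_univ _)]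
  rfl

/-- Finite closed-cover lemma: a nonempty open set covered by finitely many closed
sets meets the interior of one of them. -/
lemma exists_interior_meet {ι : Type*} [DecidableEq ι] (S : Finset ι) (C : ι → Set Pt)
    (hC : ∀ i ∈ S, IsClosed (C i)) :
    ∀ U : Set Pt, IsOpen U → U.Nonempty → (U ⊆ ⋃ i ∈ S, C i) →
      ∃ i ∈ S, (U ∩ interior (C i)).Nonempty := by
  induction S using Finset.induction_on with
  | empty => intro U _ hne hcov; obtain ⟨x, hx⟩ := hne; simpa using hcov hx
  | @insert a S ha ih =>
    intro U hU hne hcov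
    by_cases hU' : (U \ C a).Nonempty
    · have hopen : IsOpen (U \ C a) := hU.sdiff (hC a (Finset.mem_insert_self a S))
      have hcov' : U \ C a ⊆ ⋃ i ∈ S, C i := by
        intro x hx
        have := hcov hx.1
        simp only [Finset.mem_insert, Set.mem_iUnion, exists_prop] at this ⊢
        obtain ⟨i, hi | hi, hxi⟩ := this
        · exact absurd (hi ▸ hxi) hx.2
        · exact ⟨i, hi, hxi⟩
      obtain ⟨i, hi, hni⟩ := ih (fun i hi => hC i (Finset.mem_insert_of_mem hi))
        (U \ C a) hopen hU' hcov'
      exact ⟨i, Finset.mem_insert_of_mem hi,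
        hni.mono (Set.inter_subset_inter_left _ Set.diff_subset)⟩
    · have hsub : U ⊆ C a := by
        intro x hx
        by_contra hxa
        exact hU' ⟨x, hx, hxa⟩
      obtain ⟨x, hx⟩ := hne
      exact ⟨a, Finset.mem_insert_self a S,
        ⟨x, hx, interior_maximal hsub hU hx⟩⟩

lemma exists_charSection {A : Finset Pt} (ω : Pt → ℝ) (T : Triangulation A) :
    ∃ g : Pt → ℝ, IsCharSection ω T g := by
  classical
  have hF : ∀ t : Finset Pt, ∃ f : Pt →ᵃ[ℝ] ℝ, t ∈ T.tris → ∀ p ∈ t, f p = ω p := by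
    intro t
    by_cases h : t ∈ T.tris
    · obtain ⟨f, hf⟩ := exists_interp ω t (T.card3 t h) (T.indep t h)
      exact ⟨f, fun _ => hf⟩
    · exact ⟨0, fun h' => absurd h' h⟩
  choose F hF using hF
  refine ⟨fun x => if h : ∃ t ∈ T.tris, x ∈ convexHull ℝ (t : Set Pt)
      then F h.choose x else 0, ?_⟩
  intro t ht
  refine ⟨F t, hF t ht, ?_⟩
  intro x hx
  have hex : ∃ s ∈ T.tris, x ∈ convexHull ℝ (s : Set Pt) := ⟨t, ht, hx⟩
  simp only [dif_pos hex]
  obtain ⟨hs1, hs2⟩ := hex.choose_spec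
  have hmem : x ∈ convexHull ℝ ((t ∩ hex.choose : Finset Pt) : Set Pt) := by
    rw [← T.inter t ht hex.choose hs1]; exact ⟨hx, hs2⟩
  have heq : Set.EqOn (F hex.choose) (F t) ((t ∩ hex.choose : Finset Pt) : Set Pt) := by
    intro p hp
    simp only [Finset.coe_inter, Set.mem_inter_iff, Finset.mem_coe] at hp
    rw [hF hex.choose hs1 p hp.2, hF t ht p hp.1]
  exact eqOn_affineSpan_of_eqOn _ _ heq (convexHull_subset_affineSpan _ hmem)

lemma charSection_eqOn {A : Finset Pt} {ω : Pt → ℝ} {T : Triangulation A} {g g' : Pt → ℝ}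
    (h : IsCharSection ω T g) (h' : IsCharSection ω T g') :
    Set.EqOn g g' (convexHull ℝ (A : Set Pt)) := by
  intro x hx
  rw [← T.cover] at hx
  simp only [Set.mem_iUnion, exists_prop] at hx
  obtain ⟨t, ht, hxt⟩ := hx
  obtain ⟨f, hf, hfx⟩ := h t ht
  obtain ⟨f', hf', hf'x⟩ := h' t ht
  rw [hfx x hxt, hf'x x hxt]
  exact eqOn_affineSpan_of_eqOn f f'
    (fun p hp => by rw [hf p (Finset.mem_coe.mp hp), hf' p (Finset.mem_coe.mp hp)])
    (convexHull_subset_affineSpan _ hxt)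

lemma tris_subset_of_eqOn {A : Finset Pt} {ω : Pt → ℝ} (hgen : Generic A ω)
    {T1 T2 : Triangulation A} {g1 g2 : Pt → ℝ}
    (h1 : IsCharSection ω T1 g1) (h2 : IsCharSection ω T2 g2)
    (heq : Set.EqOn g1 g2 (convexHull ℝ (A : Set Pt))) :
    T1.tris ⊆ T2.tris := by
  classical
  intro t ht
  obtain ⟨f1, hf1, hg1⟩ := h1 t ht
  have hspan : affineSpan ℝ (t : Set Pt) = ⊤ := tri_span t (T1.card3 t ht) (T1.indep t ht)
  have hUne : (interior (convexHull ℝ (t : Set Pt))).Nonempty :=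
    interior_convexHull_nonempty_iff_affineSpan_eq_top.mpr hspan
  have htA : convexHull ℝ (t : Set Pt) ⊆ convexHull ℝ (A : Set Pt) :=
    convexHull_mono (T1.verts t ht)
  have hcov : interior (convexHull ℝ (t : Set Pt))
      ⊆ ⋃ s ∈ T2.tris, convexHull ℝ (s : Set Pt) := by
    rw [T2.cover]; exact interior_subset.trans htA
  obtain ⟨s, hs, x, hxU, hxI⟩ := exists_interior_meet T2.tris
    (fun s => convexHull ℝ (s : Set Pt))
    (fun s _ => (s.finite_toSet).isClosed_convexHull ℝ) _ isOpen_interior hUne hcov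
  obtain ⟨f2, hf2, hg2⟩ := h2 s hs
  set V := interior (convexHull ℝ (t : Set Pt)) ∩ interior (convexHull ℝ (s : Set Pt)) with hVdef
  have hV : IsOpen V := isOpen_interior.inter isOpen_interior
  have hVne : V.Nonempty := ⟨x, hxU, hxI⟩
  have hEqV : Set.EqOn f1 f2 V := by
    intro y hy
    have hyt : y ∈ convexHull ℝ (t : Set Pt) := interior_subset hy.1
    have hys : y ∈ convexHull ℝ (s : Set Pt) := interior_subset hy.2
    rw [← hg1 y hyt, ← hg2 y hys]
    exact heq (htA hyt)
  have hff : f1 = f2 := by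
    have hsp : affineSpan ℝ V = ⊤ := hV.affineSpan_eq_top hVne
    have hEq := eqOn_affineSpan_of_eqOn f1 f2 hEqV
    rw [hsp] at hEq
    exact AffineMap.ext fun z => hEq (by simp)
  by_cases hts : t = s
  · rwa [hts]
  exfalso
  have hwex : ∃ w ∈ s, w ∉ t := by
    by_contra hc
    push_neg at hc
    exact hts (Finset.eq_of_subset_of_card_le hc
      (by rw [T2.card3 s hs, T1.card3 t ht])).symm
  obtain ⟨w, hws, hwt⟩ := hwex
  obtain ⟨p, q, r, hpq, hpr, hqr, hteq⟩ := Finset.card_eq_three.mp (T1.card3 t ht)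
  have hpt : p ∈ t := by rw [hteq]; simp
  have hqt : q ∈ t := by rw [hteq]; simp
  have hrt : r ∈ t := by rw [hteq]; simp
  have hpA : p ∈ A := T1.verts t ht (Finset.mem_coe.mpr hpt)
  have hqA : q ∈ A := T1.verts t ht (Finset.mem_coe.mpr hqt)
  have hrA : r ∈ A := T1.verts t ht (Finset.mem_coe.mpr hrt)
  have hwA : w ∈ A := T2.verts s hs (Finset.mem_coe.mpr hws)
  have hpw : p ≠ w := fun h => hwt (h ▸ hpt)
  have hqw : q ≠ w := fun h => hwt (h ▸ hqt)
  have hrw : r ≠ w := fun h => hwt (h ▸ hrt)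
  have hindep := hgen p hpA q hqA r hrA w hwA hpq hpr hpw hqr hqw hrw
  have hf1p : f1 p = ω p := hf1 p hpt
  have hf1q : f1 q = ω q := hf1 q hqt
  have hf1r : f1 r = ω r := hf1 r hrt
  have hf1w : f1 w = ω w := by rw [hff]; exact hf2 w hws
  let G : Pt →ᵃ[ℝ] (Fin 3 → ℝ) := AffineMap.pi
    ![(LinearMap.proj 0 : Pt →ₗ[ℝ] ℝ).toAffineMap,
      (LinearMap.proj 1 : Pt →ₗ[ℝ] ℝ).toAffineMap, f1]
  have hGl : ∀ v : Pt, f1 v = ω v → liftPt ω v = G v := by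
    intro v hv
    funext j
    fin_cases j <;>
      simp [liftPt, G, AffineMap.pi_apply, hv]
  have hcomp : ![liftPt ω p, liftPt ω q, liftPt ω r, liftPt ω w] = G ∘ ![p, q, r, w] := by
    funext i
    fin_cases i
    · exact hGl p hf1p
    · exact hGl q hf1q
    · exact hGl r hf1r
    · exact hGl w hf1w
  rw [hcomp] at hindep
  have h4 := AffineIndependent.of_comp G hindep
  have hle := h4.card_le_finrank_succ
  have hfr := Submodule.finrank_le (vectorSpan ℝ (Set.range ![p, q, r, w]))
  rw [finrank_Pt] at hfr
  rw [Fintype.card_fin] at hle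
  omega


/-- If the height function `ω` is sufficiently generic (no four lifted points coplanar),
then the relation `≤₂` ("the characteristic section lies vertically below") is a partial
order on the set of all triangulations of `A`. -/
theorem le2_isPartialOrder (A : Finset Pt) (ω : Pt → ℝ) (hgen : Generic A ω) :
    IsPartialOrder (Triangulation A) (le2 ω) := by
  refine { refl := ?_, trans := ?_, antisymm := ?_ }
  · intro T
    obtain ⟨g, hg⟩ := exists_charSection ω T
    exact ⟨g, g, hg, hg, fun x _ => le_rfl⟩
  · rintro T1 T2 T3 ⟨g1, g2, hc1, hc2, hle⟩ ⟨g2', g3, hc2', hc3, hle'⟩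
    exact ⟨g1, g3, hc1, hc3, fun x hx =>
      (hle x hx).trans ((charSection_eqOn hc2 hc2' hx).le.trans (hle' x hx))⟩
  · rintro T1 T2 ⟨g1, g2, hc1, hc2, hle⟩ ⟨g2', g1', hc2', hc1', hle'⟩
    have heq : Set.EqOn g1 g2 (convexHull ℝ (A : Set Pt)) := by
      intro x hx
      refine le_antisymm (hle x hx) ?_
      calc g2 x = g2' x := charSection_eqOn hc2 hc2' hx
        _ ≤ g1' x := hle' x hx
        _ = g1 x := charSection_eqOn hc1' hc1 hx
    have key : T1.tris = T2.tris :=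
      Finset.Subset.antisymm (tris_subset_of_eqOn hgen hc1 hc2 heq)
        (tris_subset_of_eqOn hgen hc2 hc1 fun x hx => (heq hx).symm)
    obtain ⟨t1, c1, v1, i1, cv1, in1⟩ := T1
    obtain ⟨t2, c2, v2, i2, cv2, in2⟩ := T2
    simp only at key
    subst key
    rfl
end

section
/- Let T be a triangulation of a finite planar point set A in general position with height function ω, and suppose ω is convex. If every edge of T is locally regular with respect to down-flips (i.e., for each interior edge {a,b} shared by triangles abc and abd, the lifted point d' lies on or above the plane through a', b', c'), and T contains every point of A as a vertex, then T is the regular triangulation of (A, ω). -/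
lemma lineMap_eval (f : Pt →ᵃ[ℝ] ℝ) (x₀ q : Pt) (μ ν : ℝ) :
    f (AffineMap.lineMap x₀ q ν)
      = f (AffineMap.lineMap x₀ q μ) + (ν - μ) * f.linear (q - x₀) := by
  have h : ∀ c : ℝ, f (AffineMap.lineMap x₀ q c) = c * f.linear (q - x₀) + f x₀ := by
    intro c
    rw [AffineMap.lineMap_apply_module']
    have h2 : (c • (q - x₀) + x₀ : Pt) = c • (q - x₀) +ᵥ x₀ := rfl
    rw [h2, AffineMap.map_vadd, map_smul]
    simp [smul_eq_mul]
  rw [h, h]; ring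

lemma lineMap_continuous' (x₀ q : Pt) : Continuous (fun ρ : ℝ => AffineMap.lineMap x₀ q ρ) := by
  have : (fun ρ : ℝ => AffineMap.lineMap x₀ q ρ) = fun ρ : ℝ => ρ • (q - x₀) + x₀ := by
    funext ρ; rw [AffineMap.lineMap_apply_module']
  rw [this]
  exact (continuous_id.smul continuous_const).add continuous_const

lemma toward (A : Finset Pt) (T : Triangulation A) (x₀ q : Pt)
    (hx₀ : x₀ ∈ convexHull ℝ (A : Set Pt)) (hq : q ∈ A) (m e : ℝ)
    (hm : m ∈ Set.Icc (0:ℝ) 1) (he : e ∈ Set.Icc (0:ℝ) 1) (hne : m ≠ e) :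
    ∃ s ∈ T.tris, ∃ ρ₀, ρ₀ ∈ Set.uIcc m e ∧ ρ₀ ≠ m ∧
      ∀ ρ ∈ Set.uIcc m ρ₀, AffineMap.lineMap x₀ q ρ ∈ convexHull ℝ (s : Set Pt) := by
  set φ : ℝ → Pt := fun ρ => AffineMap.lineMap x₀ q ρ with hφ
  have cover : ∀ μ : ℝ, 0 ≤ μ → μ ≤ 1 → ∃ s ∈ T.tris, φ μ ∈ convexHull ℝ (s : Set Pt) := by
    intro μ h0 h1
    have hmem : φ μ ∈ convexHull ℝ (A : Set Pt) :=
      (convex_convexHull ℝ _).lineMap_mem hx₀ (subset_convexHull ℝ _ hq) ⟨h0, h1⟩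
    rw [← T.cover] at hmem
    simpa using hmem
  have htne : T.tris.Nonempty := by
    obtain ⟨s, hs, -⟩ := cover 0 le_rfl zero_le_one
    exact ⟨s, hs⟩
  -- in-range of sample points
  have hrange : ∀ t : ℝ, 0 < t → t ≤ 1 → 0 ≤ m + t * (e - m) ∧ m + t * (e - m) ≤ 1 := by
    intro t h0 h1
    obtain ⟨hm0, hm1⟩ := hm; obtain ⟨he0, he1⟩ := he
    constructor <;> nlinarith
  have claim : ∃ s ∈ T.tris, ∀ ε : ℝ, 0 < ε →
      ∃ t : ℝ, 0 < t ∧ t ≤ ε ∧ t ≤ 1 ∧ φ (m + t * (e - m)) ∈ convexHull ℝ (s : Set Pt) := by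
    by_contra hcon
    push_neg at hcon
    classical
    set g : Finset Pt → ℝ := fun s =>
      if h : s ∈ T.tris then Classical.choose (hcon s h) else 1 with hg
    have hgpos : ∀ s ∈ T.tris, 0 < g s := by
      intro s hs
      simp only [hg, dif_pos hs]
      exact (Classical.choose_spec (hcon s hs)).1
    have hgspec : ∀ s ∈ T.tris, ∀ t : ℝ, 0 < t → t ≤ g s → t ≤ 1 →
        φ (m + t * (e - m)) ∉ convexHull ℝ (s : Set Pt) := by
      intro s hs t h0 h1 h2
      have hgs : g s = Classical.choose (hcon s hs) := by rw [hg]; exact dif_pos hs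
      exact (Classical.choose_spec (hcon s hs)).2 t h0 (hgs ▸ h1) h2
    set ε₀ : ℝ := min 1 (T.tris.inf' htne g) with hε₀
    have hε₀pos : 0 < ε₀ := by
      apply lt_min one_pos
      rw [Finset.lt_inf'_iff]
      intro s hs; exact hgpos s hs
    have hε₀1 : ε₀ ≤ 1 := min_le_left _ _
    obtain ⟨h0, h1⟩ := hrange ε₀ hε₀pos hε₀1
    obtain ⟨s, hs, hmem⟩ := cover (m + ε₀ * (e - m)) h0 h1
    exact hgspec s hs ε₀ hε₀pos (le_trans (min_le_right _ _) (Finset.inf'_le g hs)) hε₀1 hmem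
  obtain ⟨s, hs, hsam⟩ := claim
  refine ⟨s, hs, ?_⟩
  have hJclosed : IsClosed {ρ : ℝ | φ ρ ∈ convexHull ℝ (s : Set Pt)} :=
    IsClosed.preimage (lineMap_continuous' x₀ q) (s.finite_toSet.isClosed_convexHull (𝕜 := ℝ))
  have hJconv : Convex ℝ {ρ : ℝ | φ ρ ∈ convexHull ℝ (s : Set Pt)} :=
    (convex_convexHull ℝ _).affine_preimage (AffineMap.lineMap x₀ q)
  have hmJ : φ m ∈ convexHull ℝ (s : Set Pt) := by
    have : m ∈ closure {ρ : ℝ | φ ρ ∈ convexHull ℝ (s : Set Pt)} := by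
      rw [Metric.mem_closure_iff]
      intro ε hε
      obtain ⟨t, ht0, htε, ht1, hmem⟩ := hsam (ε / (|e - m| + 1)) (by positivity)
      refine ⟨m + t * (e - m), hmem, ?_⟩
      rw [Real.dist_eq]
      have h1 : |m - (m + t * (e - m))| = t * |e - m| := by
        rw [abs_sub_comm]
        rw [show m + t * (e - m) - m = t * (e - m) by ring, abs_mul, abs_of_pos ht0]
      rw [h1]
      have habs : (0:ℝ) ≤ |e - m| := abs_nonneg _
      have h2 : ε / (|e - m| + 1) * |e - m| < ε := by
        rw [div_mul_eq_mul_div, div_lt_iff₀ (by positivity)]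
        nlinarith
      linarith [mul_le_mul_of_nonneg_right htε habs]
    rwa [hJclosed.closure_eq] at this
  obtain ⟨t₁, ht₁0, ht₁ε, ht₁1, hmem₁⟩ := hsam 1 one_pos
  refine ⟨m + t₁ * (e - m), ?_, ?_, ?_⟩
  · rw [Set.mem_uIcc]
    rcases lt_or_gt_of_ne hne with h | h
    · left; constructor <;> nlinarith
    · right; constructor <;> nlinarith
  · intro hcon
    have : t₁ * (e - m) = 0 := by linarith [hcon]
    rcases mul_eq_zero.mp this with h | h
    · exact ht₁0.ne' h
    · exact hne (by linarith)
  · intro ρ hρ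
    have := Set.OrdConnected.uIcc_subset (hJconv.ordConnected) hmJ hmem₁ hρ
    exact this

lemma affine_le_hull (f g : Pt →ᵃ[ℝ] ℝ) (s : Set Pt) (h : ∀ p ∈ s, f p ≤ g p) :
    ∀ x ∈ convexHull ℝ s, f x ≤ g x := by
  have hconv : Convex ℝ {x : Pt | f x ≤ g x} := by
    have : {x : Pt | f x ≤ g x} = (g - f) ⁻¹' Set.Ici 0 := by
      ext x
      simp [AffineMap.coe_sub, sub_nonneg]
    rw [this]
    exact (convex_Ici (0:ℝ)).affine_preimage (g - f)
  intro x hx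
  exact convexHull_min h hconv hx

lemma affine_eq_hull (f g : Pt →ᵃ[ℝ] ℝ) (s : Set Pt) (h : ∀ p ∈ s, f p = g p) :
    ∀ x ∈ convexHull ℝ s, f x = g x := fun x hx =>
  le_antisymm (affine_le_hull f g s (fun p hp => (h p hp).le) x hx)
    (affine_le_hull g f s (fun p hp => (h p hp).ge) x hx)

/-- Two distinct triangles of a triangulation intersect in at most two points;
if a point lies in both hulls, it lies in the hull of the (≤ 2 point) intersection. -/
lemma vertex_mem (A : Finset Pt) (hpos : GenPos A) (T : Triangulation A)
    {s : Finset Pt} (hs : s ∈ T.tris) {q : Pt} (hq : q ∈ A)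
    (hqs : q ∈ convexHull ℝ (s : Set Pt))
    {s' : Finset Pt} (hs' : s' ∈ T.tris) (hqs' : q ∈ s') : q ∈ s := by
  classical
  set E : Finset Pt := s ∩ s' with hE
  have hqE : q ∈ convexHull ℝ (E : Set Pt) := by
    rw [hE, ← T.inter s hs s' hs']
    exact ⟨hqs, subset_convexHull ℝ _ (by exact_mod_cast hqs')⟩
  have hEs : E ⊆ s := Finset.inter_subset_left
  have hEs' : E ⊆ s' := Finset.inter_subset_right
  have hcard : E.card ≤ 3 := le_trans (Finset.card_le_card hEs) (le_of_eq (T.card3 s hs))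
  interval_cases h : E.card
  · rw [Finset.card_eq_zero] at h
    rw [h] at hqE; simp at hqE
  · rw [Finset.card_eq_one] at h
    obtain ⟨v, hv⟩ := h
    rw [hv] at hqE
    simp only [Finset.coe_singleton, convexHull_singleton, Set.mem_singleton_iff] at hqE
    exact hEs (by rw [hv, hqE]; exact Finset.mem_singleton_self v)
  · rw [Finset.card_eq_two] at h
    obtain ⟨a, b, hab, hvE⟩ := h
    by_cases hqa : q = a
    · exact hEs (by rw [hvE, hqa]; simp)
    by_cases hqb : q = b
    · exact hEs (by rw [hvE, hqb]; simp)
    exfalso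
    have haA : a ∈ A := T.verts s hs (by exact_mod_cast hEs (by rw [hvE]; simp))
    have hbA : b ∈ A := T.verts s hs (by exact_mod_cast hEs (by rw [hvE]; simp))
    have hspan : q ∈ affineSpan ℝ ({a, b} : Set Pt) := by
      apply convexHull_subset_affineSpan
      rw [hvE] at hqE
      simpa using hqE
    have hcol : Collinear ℝ ({q, a, b} : Set Pt) :=
      collinear_insert_of_mem_affineSpan_pair hspan
    exact hpos q hq a haA b hbA hqa hqb hab hcol
  · -- card 3 : E = s = s'
    have hEeq : E = s := Finset.eq_of_subset_of_card_le hEs (by rw [T.card3 s hs, h])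
    have hEeq' : E = s' := Finset.eq_of_subset_of_card_le hEs' (by rw [T.card3 s' hs', h])
    rw [← hEeq]; rw [hEeq']; exact hqs'

lemma cross_lemma (A : Finset Pt) (ω : Pt → ℝ) (T : Triangulation A)
    (hlocreg : ∀ a b c d : Pt,
      ({a, b, c} : Finset Pt) ∈ T.tris → ({a, b, d} : Finset Pt) ∈ T.tris → c ≠ d →
      ∀ f : Pt →ᵃ[ℝ] ℝ, PlaneAt ω a b c f → f d ≤ ω d)
    (f : Finset Pt → (Pt →ᵃ[ℝ] ℝ))
    (hf : ∀ s ∈ T.tris, ∀ p ∈ s, f s p = ω p)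
    (x₀ q : Pt) (hq : q ∈ A)
    (hbad : ∀ a ∈ A, ∀ b ∈ A, x₀ ∉ (affineSpan ℝ ({a, b} : Set Pt) : Set Pt))
    {s s' : Finset Pt} (hs : s ∈ T.tris) (hs' : s' ∈ T.tris)
    {μ : ℝ} (hμ1 : μ < 1)
    (hms : AffineMap.lineMap x₀ q μ ∈ convexHull ℝ (s : Set Pt))
    (hms' : AffineMap.lineMap x₀ q μ ∈ convexHull ℝ (s' : Set Pt)) :
    f s (AffineMap.lineMap x₀ q μ) = f s' (AffineMap.lineMap x₀ q μ) ∧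
      ∀ x ∈ convexHull ℝ (s' : Set Pt), f s x ≤ f s' x := by
  classical
  by_cases hss' : s = s'
  · subst hss'; exact ⟨rfl, fun x _ => le_rfl⟩
  have hx₀q : x₀ ≠ q := by
    intro hcon
    exact hbad q hq q hq (by rw [hcon]; exact mem_affineSpan ℝ (by simp))
  set y : Pt := AffineMap.lineMap x₀ q μ with hy
  set E : Finset Pt := s ∩ s' with hE
  have hyE : y ∈ convexHull ℝ (E : Set Pt) := by
    rw [hE, ← T.inter s hs s' hs']
    exact ⟨hms, hms'⟩
  have hEs : E ⊆ s := Finset.inter_subset_left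
  have hEs' : E ⊆ s' := Finset.inter_subset_right
  have hcard : E.card ≤ 3 := le_trans (Finset.card_le_card hEs) (le_of_eq (T.card3 s hs))
  interval_cases h : E.card
  · exfalso; rw [Finset.card_eq_zero] at h; rw [h] at hyE; simp at hyE
  · -- the segment passes through a vertex: contradiction with genericity of x₀
    exfalso
    rw [Finset.card_eq_one] at h
    obtain ⟨v, hv⟩ := h
    rw [hv] at hyE
    simp only [Finset.coe_singleton, convexHull_singleton, Set.mem_singleton_iff] at hyE
    have hvA : v ∈ A := T.verts s hs (by exact_mod_cast hEs (by rw [hv]; simp))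
    have hvq : v ≠ q := by
      intro hcon
      apply hμ1.ne
      have : AffineMap.lineMap x₀ q μ = AffineMap.lineMap x₀ q (1:ℝ) := by
        rw [AffineMap.lineMap_apply_one]
        exact hyE.trans hcon
      exact AffineMap.lineMap_injective ℝ hx₀q this
    have hvmem : v ∈ affineSpan ℝ ({x₀, q} : Set Pt) := by
      rw [← hyE, hy]
      exact AffineMap.lineMap_mem_affineSpan_pair μ x₀ q
    have hcol : Collinear ℝ ({v, x₀, q} : Set Pt) :=
      collinear_insert_of_mem_affineSpan_pair hvmem
    have hx₀mem : x₀ ∈ affineSpan ℝ ({v, q} : Set Pt) := by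
      apply hcol.mem_affineSpan_of_mem_of_ne (by simp) (by simp) (by simp) hvq
    exact hbad v hvA q hq hx₀mem
  · -- shared edge: use local regularity
    rw [Finset.card_eq_two] at h
    obtain ⟨a, b, hab, hvE⟩ := h
    -- find the third vertices c and d
    have hE2 : E.card = 2 := by
      rw [hvE, Finset.card_insert_of_notMem (by simp [hab]), Finset.card_singleton]
    have hEne : ∀ u : Finset Pt, u ∈ T.tris → E ≠ u := by
      intro u hu hcon
      have := T.card3 u hu
      rw [← hcon, hE2] at this
      omega
    have third : ∀ u : Finset Pt, u ∈ T.tris → E ⊆ u → ∃ c, c ∉ E ∧ u = insert c E := by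
      intro u hu hEu
      obtain ⟨c, hcu, hcE⟩ := Finset.exists_of_ssubset (Finset.ssubset_iff_subset_ne.mpr ⟨hEu, hEne u hu⟩)
      refine ⟨c, hcE, ?_⟩
      refine (Finset.eq_of_subset_of_card_le ?_ ?_).symm
      · intro x hx
        rcases Finset.mem_insert.mp hx with h' | h'
        · rw [h']; exact hcu
        · exact hEu h'
      · rw [Finset.card_insert_of_notMem hcE, hE2, T.card3 u hu]
    obtain ⟨c, hcE, hsc⟩ := third s hs hEs
    obtain ⟨d, hdE, hsd⟩ := third s' hs' hEs'
    have hcd : c ≠ d := by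
      intro hcon
      exact hss' (by rw [hsc, hsd, hcon])
    have habc : ({a, b, c} : Finset Pt) = s := by
      rw [hsc, hvE]
      ext x; simp [Finset.mem_insert]; tauto
    have habd : ({a, b, d} : Finset Pt) = s' := by
      rw [hsd, hvE]
      ext x; simp [Finset.mem_insert]; tauto
    have haE : a ∈ E := by rw [hvE]; simp
    have hbE : b ∈ E := by rw [hvE]; simp
    have hplane : PlaneAt ω a b c (f s) :=
      ⟨hf s hs a (hEs haE), hf s hs b (hEs hbE), hf s hs c (by rw [hsc]; exact Finset.mem_insert_self c E)⟩
    have hfd : f s d ≤ ω d :=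
      hlocreg a b c d (habc ▸ hs) (habd ▸ hs') hcd (f s) hplane
    have hdom : ∀ x ∈ convexHull ℝ (s' : Set Pt), f s x ≤ f s' x := by
      apply affine_le_hull
      intro p hp
      have hp' : p ∈ s' := by exact_mod_cast hp
      rw [hsd] at hp'
      rcases Finset.mem_insert.mp hp' with h' | h'
      · rw [h']
        rw [hf s' hs' d (by rw [hsd]; exact Finset.mem_insert_self d E)]
        exact hfd
      · rw [hf s hs p (hEs h'), hf s' hs' p (hEs' h')]
    refine ⟨?_, hdom⟩
    apply affine_eq_hull (f s) (f s') (E : Set Pt) _ y hyE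
    intro p hp
    have hp' : p ∈ E := by exact_mod_cast hp
    rw [hf s hs p (hEs hp'), hf s' hs' p (hEs' hp')]
  · exfalso
    have hEeq : E = s := Finset.eq_of_subset_of_card_le hEs (by rw [T.card3 s hs, h])
    have hEeq' : E = s' := Finset.eq_of_subset_of_card_le hEs' (by rw [T.card3 s' hs', h])
    exact hss' (by rw [← hEeq, hEeq'])

lemma not_in_two_tris (A : Finset Pt) (T : Triangulation A) {t s : Finset Pt}
    (ht : t ∈ T.tris) (hs : s ∈ T.tris) (hne : t ≠ s) {x : Pt}
    (hxt : x ∈ convexHull ℝ (t : Set Pt)) (hxs : x ∈ convexHull ℝ (s : Set Pt))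
    (hbad : ∀ a ∈ A, ∀ b ∈ A, x ∉ (affineSpan ℝ ({a, b} : Set Pt) : Set Pt)) : False := by
  classical
  set E : Finset Pt := t ∩ s with hE
  have hxE : x ∈ convexHull ℝ (E : Set Pt) := by
    rw [hE, ← T.inter t ht s hs]; exact ⟨hxt, hxs⟩
  have hEt : E ⊆ t := Finset.inter_subset_left
  have hEs : E ⊆ s := Finset.inter_subset_right
  have hcard : E.card ≤ 3 := le_trans (Finset.card_le_card hEt) (le_of_eq (T.card3 t ht))
  interval_cases h : E.card
  · rw [Finset.card_eq_zero] at h; rw [h] at hxE; simp at hxE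
  · rw [Finset.card_eq_one] at h
    obtain ⟨v, hv⟩ := h
    rw [hv] at hxE
    simp only [Finset.coe_singleton, convexHull_singleton, Set.mem_singleton_iff] at hxE
    have hvA : v ∈ A := T.verts t ht (by exact_mod_cast hEt (by rw [hv]; simp))
    refine hbad v hvA v hvA ?_
    rw [hxE]
    exact mem_affineSpan ℝ (by simp)
  · rw [Finset.card_eq_two] at h
    obtain ⟨a, b, hab, hvE⟩ := h
    have haA : a ∈ A := T.verts t ht (by exact_mod_cast hEt (by rw [hvE]; simp))
    have hbA : b ∈ A := T.verts t ht (by exact_mod_cast hEt (by rw [hvE]; simp))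
    refine hbad a haA b hbA ?_
    apply convexHull_subset_affineSpan
    rw [hvE] at hxE
    simpa using hxE
  · have hEeq : E = t := Finset.eq_of_subset_of_card_le hEt (by rw [T.card3 t ht, h])
    have hEeq' : E = s := Finset.eq_of_subset_of_card_le hEs (by rw [T.card3 s hs, h])
    exact hne (by rw [← hEeq, hEeq'])

/-- `s` is a triangle covering the segment immediately to the right of parameter `μ`. -/
def RExtP (A : Finset Pt) (T : Triangulation A) (x₀ q : Pt) (μ : ℝ) (s : Finset Pt) : Prop :=
  s ∈ T.tris ∧ ∃ ν, μ < ν ∧ ν ≤ 1 ∧ ∀ ρ, μ ≤ ρ → ρ ≤ ν →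
    AffineMap.lineMap x₀ q ρ ∈ convexHull ℝ (s : Set Pt)

/-- The invariant of the walk. -/
def InvP (A : Finset Pt) (T : Triangulation A) (f : Finset Pt → Pt →ᵃ[ℝ] ℝ)
    (t₀ : Finset Pt) (x₀ q : Pt) (μ : ℝ) : Prop :=
  ∀ s, RExtP A T x₀ q μ s →
    f t₀ (AffineMap.lineMap x₀ q μ) ≤ f s (AffineMap.lineMap x₀ q μ) ∧
      (f t₀).linear (q - x₀) ≤ (f s).linear (q - x₀)

lemma invP_zero (A : Finset Pt) (T : Triangulation A) (f : Finset Pt → Pt →ᵃ[ℝ] ℝ)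
    {t₀ : Finset Pt} (ht₀ : t₀ ∈ T.tris) (x₀ q : Pt)
    (hx₀t : x₀ ∈ convexHull ℝ (t₀ : Set Pt))
    (hbad : ∀ a ∈ A, ∀ b ∈ A, x₀ ∉ (affineSpan ℝ ({a, b} : Set Pt) : Set Pt)) :
    InvP A T f t₀ x₀ q 0 := by
  rintro s ⟨hs, ν, hν, hν1, hmem⟩
  by_cases hst : t₀ = s
  · subst hst; exact ⟨le_rfl, le_rfl⟩
  exfalso
  have h0 : AffineMap.lineMap x₀ q (0:ℝ) ∈ convexHull ℝ (s : Set Pt) := hmem 0 le_rfl hν.le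
  rw [AffineMap.lineMap_apply_zero] at h0
  exact not_in_two_tris A T ht₀ hs hst hx₀t h0 hbad

lemma invP_limit (A : Finset Pt) (ω : Pt → ℝ) (T : Triangulation A)
    (hlocreg : ∀ a b c d : Pt,
      ({a, b, c} : Finset Pt) ∈ T.tris → ({a, b, d} : Finset Pt) ∈ T.tris → c ≠ d →
      ∀ f : Pt →ᵃ[ℝ] ℝ, PlaneAt ω a b c f → f d ≤ ω d)
    (f : Finset Pt → (Pt →ᵃ[ℝ] ℝ)) (hf : ∀ s ∈ T.tris, ∀ p ∈ s, f s p = ω p)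
    (t₀ : Finset Pt) (x₀ q : Pt) (hq : q ∈ A)
    (hbad : ∀ a ∈ A, ∀ b ∈ A, x₀ ∉ (affineSpan ℝ ({a, b} : Set Pt) : Set Pt))
    (hx₀A : x₀ ∈ convexHull ℝ (A : Set Pt)) {m : ℝ} (hm0 : 0 < m) (hm1 : m ≤ 1)
    (hbelow : ∀ ρ, 0 ≤ ρ → ρ < m → InvP A T f t₀ x₀ q ρ) :
    InvP A T f t₀ x₀ q m := by
  rintro s' ⟨hs', ν, hνm, hν1, hmem'⟩
  have hmlt1 : m < 1 := lt_of_lt_of_le hνm hν1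
  obtain ⟨sL, hsL, ρ₀, hρu, hρne, hρmem⟩ :=
    toward A T x₀ q hx₀A hq m 0 ⟨hm0.le, hm1⟩ ⟨le_rfl, zero_le_one⟩ (ne_of_gt hm0)
  have hρ0m : ρ₀ ≤ m ∧ 0 ≤ ρ₀ := by
    rw [Set.mem_uIcc] at hρu
    rcases hρu with ⟨h1, h2⟩ | ⟨h1, h2⟩ <;> constructor <;> linarith
  have hρlt : ρ₀ < m := lt_of_le_of_ne hρ0m.1 hρne
  have hImem : ∀ ρ, ρ₀ ≤ ρ → ρ ≤ m →
      AffineMap.lineMap x₀ q ρ ∈ convexHull ℝ (sL : Set Pt) := fun ρ h1 h2 =>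
    hρmem ρ (by rw [Set.mem_uIcc]; right; exact ⟨h1, h2⟩)
  obtain ⟨hval, hσ⟩ := hbelow ρ₀ hρ0m.2 hρlt sL ⟨hsL, m, hρlt, hm1, hImem⟩
  have hvalm : f t₀ (AffineMap.lineMap x₀ q m) ≤ f sL (AffineMap.lineMap x₀ q m) := by
    rw [lineMap_eval (f t₀) x₀ q ρ₀ m, lineMap_eval (f sL) x₀ q ρ₀ m]
    have := mul_le_mul_of_nonneg_left hσ (sub_nonneg.mpr hρ0m.1)
    linarith
  by_cases hss : s' = sL
  · cases hss; exact ⟨hvalm, hσ⟩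
  · have hmsL : AffineMap.lineMap x₀ q m ∈ convexHull ℝ (sL : Set Pt) :=
      hImem m hρ0m.1 le_rfl
    have hms' : AffineMap.lineMap x₀ q m ∈ convexHull ℝ (s' : Set Pt) :=
      hmem' m le_rfl hνm.le
    obtain ⟨heq, hdom⟩ :=
      cross_lemma A ω T hlocreg f hf x₀ q hq hbad hsL hs' hmlt1 hmsL hms'
    have hσ2 : (f sL).linear (q - x₀) ≤ (f s').linear (q - x₀) := by
      have hν' := hmem' ν hνm.le le_rfl
      have hd := hdom _ hν'
      have e1 := lineMap_eval (f sL) x₀ q m ν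
      have e2 := lineMap_eval (f s') x₀ q m ν
      nlinarith [hνm]
    exact ⟨le_trans hvalm (le_of_eq heq), le_trans hσ hσ2⟩

lemma invP_prop (A : Finset Pt) (ω : Pt → ℝ) (T : Triangulation A)
    (hlocreg : ∀ a b c d : Pt,
      ({a, b, c} : Finset Pt) ∈ T.tris → ({a, b, d} : Finset Pt) ∈ T.tris → c ≠ d →
      ∀ f : Pt →ᵃ[ℝ] ℝ, PlaneAt ω a b c f → f d ≤ ω d)
    (f : Finset Pt → (Pt →ᵃ[ℝ] ℝ)) (hf : ∀ s ∈ T.tris, ∀ p ∈ s, f s p = ω p)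
    (t₀ : Finset Pt) (x₀ q : Pt) (hq : q ∈ A)
    (hbad : ∀ a ∈ A, ∀ b ∈ A, x₀ ∉ (affineSpan ℝ ({a, b} : Set Pt) : Set Pt))
    (hx₀A : x₀ ∈ convexHull ℝ (A : Set Pt)) {m : ℝ} (hm0 : 0 ≤ m) (hm1 : m < 1)
    (hInvm : InvP A T f t₀ x₀ q m) :
    ∃ ν, m < ν ∧ ν ≤ 1 ∧ ∀ ρ, m < ρ → ρ ≤ ν → InvP A T f t₀ x₀ q ρ := by
  obtain ⟨sR, hsR, ρ₁, hρu, hρne, hρmem⟩ :=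
    toward A T x₀ q hx₀A hq m 1 ⟨hm0, hm1.le⟩ ⟨zero_le_one, le_rfl⟩ (ne_of_lt hm1)
  have hρ : m ≤ ρ₁ ∧ ρ₁ ≤ 1 := by
    rw [Set.mem_uIcc] at hρu
    rcases hρu with ⟨h1, h2⟩ | ⟨h1, h2⟩ <;> constructor <;> linarith
  have hmρ₁ : m < ρ₁ := lt_of_le_of_ne hρ.1 (Ne.symm hρne)
  have hImem : ∀ ρ, m ≤ ρ → ρ ≤ ρ₁ →
      AffineMap.lineMap x₀ q ρ ∈ convexHull ℝ (sR : Set Pt) := fun ρ h1 h2 =>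
    hρmem ρ (by rw [Set.mem_uIcc]; left; exact ⟨h1, h2⟩)
  obtain ⟨hvalm, hσm⟩ := hInvm sR ⟨hsR, ρ₁, hmρ₁, hρ.2, hImem⟩
  refine ⟨min ρ₁ ((m + 1) / 2), lt_min hmρ₁ (by linarith), ?_, ?_⟩
  · exact le_trans (min_le_left _ _) hρ.2
  intro ρ hρm hρν
  have hν1 : min ρ₁ ((m + 1) / 2) < 1 := lt_of_le_of_lt (min_le_right _ _) (by linarith)
  have hρ1 : ρ < 1 := lt_of_le_of_lt hρν hν1
  have hρsR : AffineMap.lineMap x₀ q ρ ∈ convexHull ℝ (sR : Set Pt) :=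
    hImem ρ hρm.le (le_trans hρν (min_le_left _ _))
  have hvalρ : f t₀ (AffineMap.lineMap x₀ q ρ) ≤ f sR (AffineMap.lineMap x₀ q ρ) := by
    rw [lineMap_eval (f t₀) x₀ q m ρ, lineMap_eval (f sR) x₀ q m ρ]
    have := mul_le_mul_of_nonneg_left hσm (sub_nonneg.mpr hρm.le)
    linarith
  rintro s' ⟨hs', ν', hν'ρ, hν'1, hmem'⟩
  by_cases hss : s' = sR
  · cases hss; exact ⟨hvalρ, hσm⟩
  · have hms' : AffineMap.lineMap x₀ q ρ ∈ convexHull ℝ (s' : Set Pt) :=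
      hmem' ρ le_rfl hν'ρ.le
    obtain ⟨heq, hdom⟩ :=
      cross_lemma A ω T hlocreg f hf x₀ q hq hbad hsR hs' hρ1 hρsR hms'
    have hσ2 : (f sR).linear (q - x₀) ≤ (f s').linear (q - x₀) := by
      have hν' := hmem' ν' hν'ρ.le le_rfl
      have hd := hdom _ hν'
      have e1 := lineMap_eval (f sR) x₀ q ρ ν'
      have e2 := lineMap_eval (f s') x₀ q ρ ν'
      nlinarith [hν'ρ]
    exact ⟨le_trans hvalρ (le_of_eq heq), le_trans hσm hσ2⟩
lemma exists_interp_s11 (a b c : Pt) (hind : AffineIndependent ℝ ![a, b, c]) (ω : Pt → ℝ) :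
    ∃ f : Pt →ᵃ[ℝ] ℝ, f a = ω a ∧ f b = ω b ∧ f c = ω c := by
  have hcard : Fintype.card (Fin 3) = Module.finrank ℝ Pt + 1 := by
    simp [Module.finrank_fin_fun]
  have htot : affineSpan ℝ (Set.range ![a, b, c]) = ⊤ :=
    hind.affineSpan_eq_top_iff_card_eq_finrank_add_one.mpr hcard
  let B : AffineBasis (Fin 3) ℝ Pt := ⟨![a, b, c], hind, htot⟩
  refine ⟨ω a • B.coord 0 + ω b • B.coord 1 + ω c • B.coord 2, ?_, ?_, ?_⟩
  · have h0 : a = B 0 := rfl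
    rw [h0]
    simp [AffineBasis.coord_apply]
  · have h1 : b = B 1 := rfl
    rw [h1]
    simp [AffineBasis.coord_apply]
  · have h2 : c = B 2 := rfl
    rw [h2]
    simp [AffineBasis.coord_apply]

theorem delaunay_lemma_regular' (A : Finset Pt) (ω : Pt → ℝ)
    (hpos : GenPos A) (T : Triangulation A)
    (hall : ∀ p ∈ A, ∃ t ∈ T.tris, p ∈ t)
    (hlocreg : ∀ a b c d : Pt,
      ({a, b, c} : Finset Pt) ∈ T.tris → ({a, b, d} : Finset Pt) ∈ T.tris → c ≠ d →
      ∀ f : Pt →ᵃ[ℝ] ℝ, PlaneAt ω a b c f → f d ≤ ω d) :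
    RegularTri ω T := by
  classical
  have hinterp : ∀ s ∈ T.tris, ∃ g : Pt →ᵃ[ℝ] ℝ, ∀ p ∈ s, g p = ω p := by
    intro s hs
    obtain ⟨a, b, c, hab, hac, hbc, rfl⟩ := Finset.card_eq_three.mp (T.card3 s hs)
    have haA : a ∈ A := T.verts _ hs (by simp)
    have hbA : b ∈ A := T.verts _ hs (by simp)
    have hcA : c ∈ A := T.verts _ hs (by simp)
    have hind : AffineIndependent ℝ ![a, b, c] :=
      affineIndependent_iff_not_collinear_set.mpr (hpos a haA b hbA c hcA hab hac hbc)
    obtain ⟨g, hga, hgb, hgc⟩ := exists_interp_s11 a b c hind ω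
    refine ⟨g, ?_⟩
    intro p hp
    rcases Finset.mem_insert.mp hp with rfl | hp'
    · exact hga
    rcases Finset.mem_insert.mp hp' with rfl | hp''
    · exact hgb
    · rw [Finset.mem_singleton] at hp''; subst hp''; exact hgc
  choose! f hf using hinterp
  intro t₀ ht₀
  refine ⟨f t₀, hf t₀ ht₀, ?_⟩
  obtain ⟨a₀, b₀, c₀, hab₀, hac₀, hbc₀, ht₀eq⟩ := Finset.card_eq_three.mp (T.card3 t₀ ht₀)
  have ha₀A : a₀ ∈ A := T.verts _ ht₀ (by rw [ht₀eq]; simp)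
  have hb₀A : b₀ ∈ A := T.verts _ ht₀ (by rw [ht₀eq]; simp)
  have hc₀A : c₀ ∈ A := T.verts _ ht₀ (by rw [ht₀eq]; simp)
  have hnc : ¬ Collinear ℝ ({a₀, b₀, c₀} : Set Pt) :=
    hpos a₀ ha₀A b₀ hb₀A c₀ hc₀A hab₀ hac₀ hbc₀
  have hind₀ : AffineIndependent ℝ ![a₀, b₀, c₀] :=
    affineIndependent_iff_not_collinear_set.mpr hnc
  have hspanne : ∀ a b : Pt, affineSpan ℝ ({a, b} : Set Pt) ≠ ⊤ := by
    intro a b htop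
    apply hnc
    have h1 : a₀ ∈ affineSpan ℝ ({a, b} : Set Pt) := htop ▸ AffineSubspace.mem_top ℝ _ _
    have h2 : b₀ ∈ affineSpan ℝ ({a, b} : Set Pt) := htop ▸ AffineSubspace.mem_top ℝ _ _
    have h3 : c₀ ∈ affineSpan ℝ ({a, b} : Set Pt) := htop ▸ AffineSubspace.mem_top ℝ _ _
    exact collinear_triple_of_mem_affineSpan_pair h1 h2 h3
  set Bad : Set Pt :=
    ⋃ a ∈ (A : Set Pt), ⋃ b ∈ (A : Set Pt), (affineSpan ℝ ({a, b} : Set Pt) : Set Pt) with hBad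
  have hBadnull : MeasureTheory.volume Bad = 0 := by
    rw [hBad, MeasureTheory.measure_biUnion_null_iff A.countable_toSet]
    intro a _
    rw [MeasureTheory.measure_biUnion_null_iff A.countable_toSet]
    intro b _
    exact MeasureTheory.Measure.addHaar_affineSubspace _ _ (hspanne a b)
  have htop₀ : affineSpan ℝ (t₀ : Set Pt) = ⊤ := by
    have hcard : Fintype.card (Fin 3) = Module.finrank ℝ Pt + 1 := by
      simp [Module.finrank_fin_fun]
    have h := hind₀.affineSpan_eq_top_iff_card_eq_finrank_add_one.mpr hcard
    have hr : Set.range ![a₀, b₀, c₀] = (({a₀, b₀, c₀} : Finset Pt) : Set Pt) := by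
      ext x
      simp [Matrix.range_cons, Matrix.range_empty]
      tauto
    rw [ht₀eq, ← hr]
    exact h
  have hiint : (interior (convexHull ℝ (t₀ : Set Pt))).Nonempty := by
    rw [interior_convexHull_nonempty_iff_affineSpan_eq_top]
    exact htop₀
  have hipos : 0 < MeasureTheory.volume (interior (convexHull ℝ (t₀ : Set Pt))) :=
    isOpen_interior.measure_pos MeasureTheory.volume hiint
  have hnotsub : ¬ interior (convexHull ℝ (t₀ : Set Pt)) ⊆ Bad := by
    intro hsub
    exact absurd (MeasureTheory.measure_mono_null hsub hBadnull) (ne_of_gt hipos)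
  obtain ⟨x₀, hx₀i, hx₀B⟩ := Set.not_subset.mp hnotsub
  have hbad : ∀ a ∈ A, ∀ b ∈ A, x₀ ∉ (affineSpan ℝ ({a, b} : Set Pt) : Set Pt) := by
    intro a ha b hb hmem
    apply hx₀B
    rw [hBad]
    exact Set.mem_biUnion (by exact_mod_cast ha) (Set.mem_biUnion (by exact_mod_cast hb) hmem)
  have hx₀t : x₀ ∈ convexHull ℝ (t₀ : Set Pt) := interior_subset hx₀i
  have hx₀A : x₀ ∈ convexHull ℝ (A : Set Pt) := convexHull_mono (T.verts t₀ ht₀) hx₀t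
  intro q hq
  set E : Set ℝ :=
    {μ | μ ∈ Set.Icc (0:ℝ) 1 ∧ ∀ ρ, 0 ≤ ρ → ρ ≤ μ → InvP A T f t₀ x₀ q ρ} with hEdef
  have h0E : (0:ℝ) ∈ E := by
    refine ⟨⟨le_rfl, zero_le_one⟩, ?_⟩
    intro ρ h0 h1
    have hρ : ρ = 0 := le_antisymm h1 h0
    rw [hρ]
    exact invP_zero A T f ht₀ x₀ q hx₀t hbad
  have hEbdd : BddAbove E := ⟨1, fun μ hμ => hμ.1.2⟩
  have hEne : E.Nonempty := ⟨0, h0E⟩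
  set m : ℝ := sSup E with hm
  have hm0 : 0 ≤ m := le_csSup hEbdd h0E
  have hm1 : m ≤ 1 := csSup_le hEne (fun μ hμ => hμ.1.2)
  have hbelow : ∀ ρ, 0 ≤ ρ → ρ < m → InvP A T f t₀ x₀ q ρ := by
    intro ρ h0 hρ
    obtain ⟨μ, hμE, hρμ⟩ := exists_lt_of_lt_csSup hEne hρ
    exact hμE.2 ρ h0 hρμ.le
  have hInvm : InvP A T f t₀ x₀ q m := by
    rcases eq_or_lt_of_le hm0 with h | h
    · rw [← h]; exact invP_zero A T f ht₀ x₀ q hx₀t hbad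
    · exact invP_limit A ω T hlocreg f hf t₀ x₀ q hq hbad hx₀A h hm1 hbelow
  have hmeq : m = 1 := by
    by_contra hne
    have hmlt : m < 1 := lt_of_le_of_ne hm1 hne
    obtain ⟨ν, hνm, hν1, hνall⟩ :=
      invP_prop A ω T hlocreg f hf t₀ x₀ q hq hbad hx₀A hm0 hmlt hInvm
    have hνE : ν ∈ E := by
      refine ⟨⟨by linarith, hν1⟩, ?_⟩
      intro ρ h0 hρν
      rcases lt_trichotomy ρ m with h | h | h
      · exact hbelow ρ h0 h
      · rw [h]; exact hInvm
      · exact hνall ρ h hρν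
    have hle := le_csSup hEbdd hνE
    rw [← hm] at hle
    linarith
  obtain ⟨sL, hsL, ρ₀, hρu, hρne, hρmem⟩ :=
    toward A T x₀ q hx₀A hq 1 0 ⟨zero_le_one, le_rfl⟩ ⟨le_rfl, zero_le_one⟩ one_ne_zero
  have hρ0 : 0 ≤ ρ₀ ∧ ρ₀ ≤ 1 := by
    rw [Set.mem_uIcc] at hρu
    rcases hρu with ⟨h1, h2⟩ | ⟨h1, h2⟩ <;> constructor <;> linarith
  have hρlt : ρ₀ < 1 := lt_of_le_of_ne hρ0.2 hρne
  have hImem : ∀ ρ, ρ₀ ≤ ρ → ρ ≤ 1 →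
      AffineMap.lineMap x₀ q ρ ∈ convexHull ℝ (sL : Set Pt) := fun ρ h1 h2 =>
    hρmem ρ (by rw [Set.mem_uIcc]; right; exact ⟨h1, h2⟩)
  obtain ⟨hval, hσ⟩ :=
    hbelow ρ₀ hρ0.1 (by rw [hmeq]; exact hρlt) sL ⟨hsL, 1, hρlt, le_rfl, hImem⟩
  have hval1 : f t₀ (AffineMap.lineMap x₀ q (1:ℝ)) ≤ f sL (AffineMap.lineMap x₀ q (1:ℝ)) := by
    rw [lineMap_eval (f t₀) x₀ q ρ₀ 1, lineMap_eval (f sL) x₀ q ρ₀ 1]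
    have := mul_le_mul_of_nonneg_left hσ (sub_nonneg.mpr hρ0.2)
    linarith
  rw [AffineMap.lineMap_apply_one] at hval1
  have hqsL : q ∈ convexHull ℝ (sL : Set Pt) := by
    have := hImem 1 hρ0.2 le_rfl
    rwa [AffineMap.lineMap_apply_one] at this
  obtain ⟨s', hs', hqs'⟩ := hall q hq
  have hqmem : q ∈ sL := vertex_mem A hpos T hsL hq hqsL hs' hqs'
  calc f t₀ q ≤ f sL q := hval1
    _ = ω q := hf sL hsL q hqmem

/-- **The Delaunay Lemma for regular triangulations.**  Let `A` be a finite planar point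
set in general position with a generic convex height function `ω`, and let `T` be a
triangulation of `A` which uses every point of `A` as a vertex.  If every interior edge of
`T` is locally regular with respect to down-flips — for each edge `{a,b}` shared by
triangles `abc` and `abd`, the lifted point `d'` lies on or above the plane through
`a', b', c'` — then `T` is the regular triangulation of `(A, ω)`. -/
theorem delaunay_lemma_regular (A : Finset Pt) (ω : Pt → ℝ)
    (hgen : Generic A ω) (hpos : GenPos A) (hconv : ConvexHeight A ω)
    (T : Triangulation A)
    (hall : ∀ p ∈ A, ∃ t ∈ T.tris, p ∈ t)
    (hlocreg : ∀ a b c d : Pt,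
      ({a, b, c} : Finset Pt) ∈ T.tris → ({a, b, d} : Finset Pt) ∈ T.tris → c ≠ d →
      ∀ f : Pt →ᵃ[ℝ] ℝ, PlaneAt ω a b c f → f d ≤ ω d) :
    RegularTri ω T :=
  delaunay_lemma_regular' A ω hpos T hall hlocreg
end

section
/- Let T be a triangulation of a planar point set in general position and let e = {a,b} be an interior edge of T shared by triangles abc and abd. If the quadrilateral on vertices a,b,c,d is not strictly convex with reflex vertex a (i.e., a lies strictly inside the triangle bcd or on its boundary configuration making {a,b} the edge to a reflex corner), and the triangle acd is not a triangle of T, then the segment (c,d) crosses a triangle of T other than abc and abd; i.e., there exists a triangle f of T with f ∉ {abc, abd} whose interior intersects the triangle acd. -/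
open MeasureTheory

lemma card3_distinct {a b c : Pt} (h : ({a,b,c}:Finset Pt).card = 3) :
    a ≠ b ∧ a ≠ c ∧ b ≠ c := by
  refine ⟨?_, ?_, ?_⟩ <;> rintro rfl
  · rw [Finset.insert_idem] at h
    have := Finset.card_insert_le a ({c} : Finset Pt)
    simp at this; omega
  · rw [Finset.insert_comm, Finset.pair_eq_singleton] at h
    have := Finset.card_insert_le b ({a} : Finset Pt)
    simp at this; omega
  · rw [Finset.pair_eq_singleton] at h
    have := Finset.card_insert_le a ({b} : Finset Pt)
    simp at this; omega


/-- **Unflippability forces a crossing triangle.**  Let `T` be a triangulation of a planar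
point set in general position and let `{a,b}` be an interior edge of `T` shared by the
triangles `abc` and `abd`.  If the quadrilateral on `a, b, c, d` is not strictly convex
with reflex vertex `a` (i.e. `a` lies strictly inside the triangle `bcd`), and the triangle
`acd` (needed for a `3-1` flip) is not a triangle of `T`, then some triangle of `T` other
than `abc` and `abd` has interior meeting the triangle `acd`. -/
theorem crossing_triangle_of_unflippable (A : Finset Pt) (hpos : GenPos A)
    (T : Triangulation A) (a b c d : Pt)
    (h1 : ({a, b, c} : Finset Pt) ∈ T.tris) (h2 : ({a, b, d} : Finset Pt) ∈ T.tris)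
    (hcd : c ≠ d)
    (hreflex : a ∈ interior (convexHull ℝ ({b, c, d} : Set Pt)))
    (hmiss : ({a, c, d} : Finset Pt) ∉ T.tris) :
    ∃ f ∈ T.tris, f ≠ ({a, b, c} : Finset Pt) ∧ f ≠ ({a, b, d} : Finset Pt) ∧
      (interior (convexHull ℝ (f : Set Pt)) ∩ convexHull ℝ ({a, c, d} : Set Pt)).Nonempty := by
  classical
  obtain ⟨hab, hac, hbc⟩ := card3_distinct (T.card3 _ h1)
  obtain ⟨-, had, hbd⟩ := card3_distinct (T.card3 _ h2)
  have ha : a ∈ A := T.verts _ h1 (by simp)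
  have hb : b ∈ A := T.verts _ h1 (by simp)
  have hc : c ∈ A := T.verts _ h1 (by simp)
  have hd : d ∈ A := T.verts _ h2 (by simp)
  -- affine bases
  have hacd : AffineIndependent ℝ ![a, c, d] :=
    affineIndependent_iff_not_collinear_set.2 (hpos a ha c hc d hd hac had hcd)
  have hbcd : AffineIndependent ℝ ![b, c, d] :=
    affineIndependent_iff_not_collinear_set.2 (hpos b hb c hc d hd hbc hbd hcd)
  have hcard : Fintype.card (Fin 3) = Module.finrank ℝ Pt + 1 := by
    simp [Module.finrank_fin_fun]
  have htopC : affineSpan ℝ (Set.range ![a, c, d]) = ⊤ :=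
    hacd.affineSpan_eq_top_iff_card_eq_finrank_add_one.2 hcard
  have htopB : affineSpan ℝ (Set.range ![b, c, d]) = ⊤ :=
    hbcd.affineSpan_eq_top_iff_card_eq_finrank_add_one.2 hcard
  let C : AffineBasis (Fin 3) ℝ Pt := ⟨![a, c, d], hacd, htopC⟩
  let B : AffineBasis (Fin 3) ℝ Pt := ⟨![b, c, d], hbcd, htopB⟩
  have hCcoe : ⇑C = ![a, c, d] := rfl
  have hBcoe : ⇑B = ![b, c, d] := rfl
  -- positive coordinates of a wrt B
  have hrange : Set.range ⇑B = ({b, c, d} : Set Pt) := by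
    rw [hBcoe, Matrix.range_cons, Matrix.range_cons, Matrix.range_cons_empty,
      Set.singleton_union, Set.singleton_union]
  have hposB : ∀ i, 0 < B.coord i a := by
    have := B.interior_convexHull ▸ (hrange ▸ hreflex)
    exact this
  set α := B.coord 0 a with hα
  set β := B.coord 1 a with hβ
  set γ := B.coord 2 a with hγ
  have hα0 : 0 < α := hposB 0
  have hβ0 : 0 < β := hposB 1
  have hγ0 : 0 < γ := hposB 2
  have hsumB : α + β + γ = 1 := by
    have := B.sum_coord_apply_eq_one a
    rw [Fin.sum_univ_three] at this
    exact this
  have harep : a = α • b + β • c + γ • d := by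
    have := B.linear_combination_coord_eq_self a
    rw [Fin.sum_univ_three] at this
    simp only [hBcoe] at this
    rw [← this]
    simp [Matrix.cons_val_zero, Matrix.cons_val_one]
    rfl
  -- representation of b in basis C
  have hbrep : b = α⁻¹ • a + (-(β/α)) • c + (-(γ/α)) • d := by
    have h1' : α • b = a - β • c - γ • d := by rw [harep]; module
    calc b = α⁻¹ • (α • b) := (inv_smul_smul₀ hα0.ne' b).symm
      _ = α⁻¹ • (a - β • c - γ • d) := by rw [h1']
      _ = α⁻¹ • a + (-(β/α)) • c + (-(γ/α)) • d := by module
  have hwsum : (Finset.univ.sum ![α⁻¹, -(β/α), -(γ/α)] : ℝ) = 1 := by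
    rw [Fin.sum_univ_three]
    simp only [Matrix.cons_val_zero, Matrix.cons_val_one, Matrix.head_cons, Matrix.cons_val_two, Matrix.tail_cons]
    field_simp
    linarith [hsumB]
  have hbcomb : Finset.univ.affineCombination ℝ ![a, c, d] ![α⁻¹, -(β/α), -(γ/α)] = b := by
    rw [Finset.univ.affineCombination_eq_linear_combination _ _ hwsum, Fin.sum_univ_three]
    simp only [Matrix.cons_val_zero, Matrix.cons_val_one, Matrix.head_cons, Matrix.cons_val_two, Matrix.tail_cons]
    exact hbrep.symm
  have comb : ∀ (u v w : ℝ), u + v + w = 1 → ∀ i : Fin 3,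
      C.coord i (u • a + v • c + w • d) = ![u, v, w] i := by
    intro u v w huv i
    have hsum : Finset.univ.sum ![u, v, w] = 1 := by
      rw [Fin.sum_univ_three]
      simpa using huv
    have hcomb : Finset.univ.affineCombination ℝ ![a, c, d] ![u, v, w]
        = u • a + v • c + w • d := by
      rw [Finset.univ.affineCombination_eq_linear_combination _ _ hsum, Fin.sum_univ_three]
      simp
    rw [← hcomb]
    exact C.coord_apply_combination_of_mem (Finset.mem_univ i) hsum
  have hwsum' : α⁻¹ + -(β/α) + -(γ/α) = 1 := by
    field_simp
    linarith [hsumB]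
  have hCb : ∀ i : Fin 3, C.coord i b = ![α⁻¹, -(β/α), -(γ/α)] i := by
    intro i
    have h := comb α⁻¹ (-(β/α)) (-(γ/α)) hwsum' i
    rwa [← hbrep] at h
  -- the witness point x
  set x : Pt := (2:ℝ)⁻¹ • a + (4:ℝ)⁻¹ • c + (4:ℝ)⁻¹ • d with hxdef
  have hCx : ∀ i : Fin 3, C.coord i x = ![(2:ℝ)⁻¹, (4:ℝ)⁻¹, (4:ℝ)⁻¹] i :=
    comb (2:ℝ)⁻¹ (4:ℝ)⁻¹ (4:ℝ)⁻¹ (by norm_num)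
  have hCa : ∀ i : Fin 3, C.coord i a = ![(1:ℝ), 0, 0] i := by
    intro i
    have h := comb 1 0 0 (by norm_num) i
    rwa [show (1:ℝ) • a + (0:ℝ) • c + (0:ℝ) • d = a by module] at h
  have hCc : ∀ i : Fin 3, C.coord i c = ![(0:ℝ), 1, 0] i := by
    intro i
    have h := comb 0 1 0 (by norm_num) i
    rwa [show (0:ℝ) • a + (1:ℝ) • c + (0:ℝ) • d = c by module] at h
  have hCd : ∀ i : Fin 3, C.coord i d = ![(0:ℝ), 0, 1] i := by
    intro i
    have h := comb 0 0 1 (by norm_num) i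
    rwa [show (0:ℝ) • a + (0:ℝ) • c + (1:ℝ) • d = d by module] at h
  have hrangeC : Set.range ⇑C = ({a, c, d} : Set Pt) := by
    rw [hCcoe, Matrix.range_cons, Matrix.range_cons, Matrix.range_cons_empty,
      Set.singleton_union, Set.singleton_union]
  have hxint : x ∈ interior (convexHull ℝ ({a, c, d} : Set Pt)) := by
    rw [← hrangeC, C.interior_convexHull]
    intro i
    rw [hCx i]
    fin_cases i <;> norm_num
  -- x avoids the two triangles
  have key : ∀ (i : Fin 3) (p : Pt), C.coord i a = 0 → C.coord i p = 0 → C.coord i b ≤ 0 →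
      0 < C.coord i x → x ∉ convexHull ℝ ({a, b, p} : Set Pt) := by
    intro i p ha0 hp hbneg hxpos hmem
    have hsub : convexHull ℝ ({a, b, p} : Set Pt) ⊆ {y | C.coord i y ≤ 0} := by
      apply convexHull_min
      · rintro y (rfl | rfl | rfl)
        · exact ha0.le
        · exact hbneg
        · exact hp.le
      · exact (convex_Iic (0:ℝ)).affine_preimage (C.coord i)
    exact absurd (hsub hmem) (not_le.2 hxpos)
  have hx1 : x ∉ convexHull ℝ ({a, b, c} : Set Pt) := by
    refine key 2 c ?_ ?_ ?_ ?_
    · simpa using hCa 2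
    · simpa using hCc 2
    · rw [hCb 2]
      simp only [Matrix.cons_val_two, Matrix.tail_cons, Matrix.head_cons]
      rw [neg_nonpos]
      positivity
    · rw [hCx 2]
      norm_num [Matrix.cons_val_two, Matrix.tail_cons, Matrix.head_cons]
  have hx2 : x ∉ convexHull ℝ ({a, b, d} : Set Pt) := by
    refine key 1 d ?_ ?_ ?_ ?_
    · simpa using hCa 1
    · simpa using hCd 1
    · rw [hCb 1]
      simp only [Matrix.cons_val_one, Matrix.head_cons, Matrix.cons_val_zero]
      rw [neg_nonpos]
      positivity
    · rw [hCx 1]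
      norm_num [Matrix.cons_val_one, Matrix.head_cons, Matrix.cons_val_zero]
  -- find a point of S avoiding all triangle frontiers
  set S : Set Pt := interior (convexHull ℝ ({a, c, d} : Set Pt)) \
      (convexHull ℝ ({a, b, c} : Set Pt) ∪ convexHull ℝ ({a, b, d} : Set Pt)) with hSdef
  have hSopen : IsOpen S := by
    apply isOpen_interior.sdiff
    exact (((((Set.finite_singleton c).insert b).insert a).isCompact_convexHull (𝕜 := ℝ)).isClosed).union
      (((((Set.finite_singleton d).insert b).insert a).isCompact_convexHull (𝕜 := ℝ)).isClosed)
  have hxS : x ∈ S := ⟨hxint, by rintro (h | h); exacts [hx1 h, hx2 h]⟩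
  have hSpos : 0 < volume S := hSopen.measure_pos volume ⟨x, hxS⟩
  have hnull : volume (⋃ t ∈ T.tris, frontier (convexHull ℝ (t : Set Pt))) = 0 := by
    refine (measure_biUnion_null_iff T.tris.countable_toSet).2 ?_
    intro t _
    exact (convex_convexHull ℝ _).addHaar_frontier volume
  have hnsub : ¬ S ⊆ ⋃ t ∈ T.tris, frontier (convexHull ℝ (t : Set Pt)) := fun h =>
    absurd (measure_mono_null h hnull) hSpos.ne'
  obtain ⟨y, hyS, hyB⟩ := Set.not_subset.1 hnsub
  have hyA : y ∈ convexHull ℝ (A : Set Pt) := by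
    refine convexHull_mono ?_ (interior_subset hyS.1)
    rintro z (rfl | rfl | rfl)
    exacts [ha, hc, hd]
  rw [← T.cover] at hyA
  obtain ⟨t, ht, hyt⟩ : ∃ t ∈ T.tris, y ∈ convexHull ℝ (t : Set Pt) := by
    simpa using hyA
  have hclosed : IsClosed (convexHull ℝ (t : Set Pt)) :=
    (t.finite_toSet.isCompact_convexHull (𝕜 := ℝ)).isClosed
  have hynotfr : y ∉ frontier (convexHull ℝ (t : Set Pt)) := fun h =>
    hyB (Set.mem_biUnion ht h)
  have hyint : y ∈ interior (convexHull ℝ (t : Set Pt)) := by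
    by_contra h
    exact hynotfr (hclosed.frontier_eq ▸ ⟨hyt, h⟩)
  have hne1 : t ≠ ({a, b, c} : Finset Pt) := by
    rintro rfl
    refine hyS.2 (Or.inl ?_)
    simpa using hyt
  have hne2 : t ≠ ({a, b, d} : Finset Pt) := by
    rintro rfl
    refine hyS.2 (Or.inr ?_)
    simpa using hyt
  exact ⟨t, ht, hne1, hne2, y, hyint, interior_subset hyS.1⟩
end

section
/- Let a be an interior vertex of a planar triangulation with link vertices p_0, ..., p_m (m ≥ 3) in cyclic order around a, and for each i let α_i be the angle at a in the triangle a p_i p_{i+1}. Suppose two consecutive edges {a, p_0} and {a, p_1} are both 'unflippable due to a', meaning the angle at a in the quadrilateral formed by their two adjacent triangles exceeds 180°: α_m + α_0 > 180° and α_0 + α_1 > 180°. Then for all other j, α_{j-1} + α_j < 180°; i.e., at most two edges in the star of a can be unflippable due to a. -/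
/-- **At most two consecutive-pair angle sums can exceed 180°.**  Let `α 0, …, α (n-1)`
(cyclically indexed, `n ≥ 4`) be the positive angles at an interior vertex `a` of a planar
triangulation, summing to `360`.  The edge towards the `j`-th link vertex is "unflippable
due to `a`" exactly when `α (j-1) + α j > 180`.  If the two consecutive edges indexed `0`
and `1` are both unflippable due to `a`, i.e. `α (-1) + α 0 > 180` and `α 0 + α 1 > 180`,
then for every other index `j` we have `α (j-1) + α j < 180`; in particular at most two
edges in the star of `a` can be unflippable due to `a`. -/
theorem at_most_two_reflex_pairs (n : ℕ) (hn : 4 ≤ n) [NeZero n] (α : ZMod n → ℝ)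
    (hpos : ∀ i : ZMod n, 0 < α i) (hsum : ∑ i : ZMod n, α i = 360)
    (h1 : α (-1) + α 0 > 180) (h2 : α 0 + α 1 > 180) :
    ∀ j : ZMod n, j ≠ 0 → j ≠ 1 → α (j - 1) + α j < 180 := by
  have hkey : ∀ s t : Finset (ZMod n), Disjoint s t →
      (∑ i ∈ s, α i) + ∑ i ∈ t, α i ≤ 360 := by
    intro s t hst
    rw [← Finset.sum_union hst, ← hsum]
    exact Finset.sum_le_sum_of_subset_of_nonneg (Finset.subset_univ _)
      (fun i _ _ => (hpos i).le)
  have hcast : ∀ k : ℕ, 0 < k → k < n → ((k : ZMod n)) ≠ 0 := by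
    intro k hk hkn h
    rw [ZMod.natCast_eq_zero_iff] at h
    exact absurd (Nat.le_of_dvd hk h) (by omega)
  have d1 : (1 : ZMod n) ≠ 0 := by
    have := hcast 1 (by omega) (by omega); simpa using this
  have d2 : (2 : ZMod n) ≠ 0 := by
    have := hcast 2 (by omega) (by omega); simpa using this
  have d3 : (3 : ZMod n) ≠ 0 := by
    have := hcast 3 (by omega) (by omega); push_cast at this; exact this
  have n1m1 : (1 : ZMod n) ≠ -1 := fun h => d2 (by linear_combination h)
  have n2m1 : (2 : ZMod n) ≠ -1 := fun h => d3 (by linear_combination h)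
  have n20 : (2 : ZMod n) ≠ 0 := d2
  have n21 : (2 : ZMod n) ≠ 1 := fun h => d1 (by linear_combination h)
  have nm10 : (-1 : ZMod n) ≠ 0 := fun h => d1 (by linear_combination -h)
  have nm11 : (-1 : ZMod n) ≠ 1 := fun h => d2 (by linear_combination -h)
  have n01 : (0 : ZMod n) ≠ 1 := fun h => d1 h.symm
  intro j hj0 hj1
  by_cases hj2 : j = 2
  · -- pair {1, 2}; bound using α (-1) + α 0 > 180
    subst hj2
    have hd : Disjoint ({1, 2} : Finset (ZMod n)) ({-1, 0} : Finset (ZMod n)) := by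
      rw [Finset.disjoint_left]
      intro x hx hy
      simp only [Finset.mem_insert, Finset.mem_singleton] at hx hy
      rcases hx with rfl | rfl <;> rcases hy with h | h
      · exact n1m1 h
      · exact d1 h
      · exact n2m1 h
      · exact n20 h
    have := hkey {1, 2} {-1, 0} hd
    rw [Finset.sum_pair n21.symm, Finset.sum_pair nm10] at this
    have h21 : (2 : ZMod n) - 1 = 1 := by ring
    rw [h21]
    linarith
  by_cases hjm1 : j = -1
  · -- pair {-2, -1}; bound using α 0 + α 1 > 180
    subst hjm1
    have nm2m1 : (-2 : ZMod n) ≠ -1 := fun h => d1 (by linear_combination -h)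
    have nm20 : (-2 : ZMod n) ≠ 0 := fun h => d2 (by linear_combination -h)
    have nm21 : (-2 : ZMod n) ≠ 1 := fun h => d3 (by linear_combination -h)
    have hd : Disjoint ({-2, -1} : Finset (ZMod n)) ({0, 1} : Finset (ZMod n)) := by
      rw [Finset.disjoint_left]
      intro x hx hy
      simp only [Finset.mem_insert, Finset.mem_singleton] at hx hy
      rcases hx with rfl | rfl <;> rcases hy with h | h
      · exact nm20 h
      · exact nm21 h
      · exact nm10 h
      · exact nm11 h
    have := hkey {-2, -1} {0, 1} hd
    rw [Finset.sum_pair nm2m1, Finset.sum_pair n01] at this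
    have hm : (-1 : ZMod n) - 1 = -2 := by ring
    rw [hm]
    linarith
  · -- generic case: pair {j - 1, j} disjoint from {-1, 0, 1}
    have e1 : j - 1 ≠ -1 := fun h => hj0 (by linear_combination h)
    have e2 : j - 1 ≠ 0 := fun h => hj1 (by linear_combination h)
    have e3 : j - 1 ≠ 1 := fun h => hj2 (by linear_combination h)
    have e4 : j - 1 ≠ j := fun h => d1 (by linear_combination -h)
    have hd : Disjoint ({j - 1, j} : Finset (ZMod n)) ({-1, 0, 1} : Finset (ZMod n)) := by
      rw [Finset.disjoint_left]
      intro x hx hy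
      simp only [Finset.mem_insert, Finset.mem_singleton] at hx hy
      rcases hx with rfl | rfl <;> rcases hy with h | h | h
      · exact e1 h
      · exact e2 h
      · exact e3 h
      · exact hjm1 h
      · exact hj0 h
      · exact hj1 h
    have := hkey {j - 1, j} {-1, 0, 1} hd
    rw [Finset.sum_pair e4] at this
    rw [show ({-1, 0, 1} : Finset (ZMod n)) = insert (-1) {0, 1} from rfl,
      Finset.sum_insert (by simp [nm10, nm11]), Finset.sum_pair n01] at this
    have := hpos 1
    linarith
end
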